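/- arXiv:2403.03902 — 6 statements merged into one kernel-verified Lean document; each statement's English description precedes it below -/
import Mathlib

section
/- For every continuous function f : ℝ² → ℝ with compact support, the limit as δ → 0⁺ of ∫_ℝ ∫_{(0,∞)} f(x,y) · δ·(2y)^{δ−1} dy dx equals (1/2)·∫_ℝ f(x,0) dx. (In other words, the measures L^δ on the upper half-plane with density δ·(2·Im z)^{δ−1} with respect to two-dimensional Lebesgue measure converge vaguely, as δ → 0⁺, to one half of Lebesgue measure on the real line.) -/
open MeasureTheory Filter Topology Set

/-!
The substitution `t = (2y)^δ` turns the inner integral into `(1/2) ∫_{t>0} f(x, t^{1/δ}/2) dt`.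
As `δ → 0⁺`, `t^{1/δ}` tends to `0` for `t < 1` and to `∞` for `t > 1`, so the integrand tends to
`f(x, 0)·1_{t<1}`. Since `t ≤ t^{1/δ}` for `t ≥ 1` and `δ ≤ 1`, all these integrands are dominated
by a multiple of the indicator of a compact box, and dominated convergence applies on the product.
-/

lemma Real.le_of_rpow_inv_le {t R δ : ℝ} (hδ : δ ∈ Ioc 0 1) (hR : 1 ≤ R) (ht : t ^ δ⁻¹ ≤ R) :
    t ≤ R := by
  by_contra! hRt
  have : t ≤ t ^ δ⁻¹ :=
    Real.self_le_rpow_of_one_le (hR.trans hRt.le) ((one_le_inv₀ hδ.1).2 hδ.2)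
  linarith

lemma tendsto_rpow_inv_nhdsGT_zero_of_lt_one {t : ℝ} (h0 : 0 ≤ t) (h1 : t < 1) :
    Tendsto (fun δ : ℝ => t ^ δ⁻¹) (𝓝[>] 0) (𝓝 0) :=
  (tendsto_rpow_atTop_of_base_lt_one t (by linarith) h1).comp tendsto_inv_nhdsGT_zero

lemma tendsto_rpow_inv_nhdsGT_zero_of_one_lt {t : ℝ} (h1 : 1 < t) :
    Tendsto (fun δ : ℝ => t ^ δ⁻¹) (𝓝[>] 0) atTop :=
  (tendsto_rpow_atTop_of_base_gt_one t h1).comp tendsto_inv_nhdsGT_zero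

theorem integral_Ioi_mul_rpow_sub_one_smul {E : Type*} [NormedAddCommGroup E] [NormedSpace ℝ E]
    (g : ℝ → E) {δ c : ℝ} (hδ : 0 < δ) (hc : 0 < c) :
    ∫ y in Ioi 0, (δ * (c * y) ^ (δ - 1)) • g y = c⁻¹ • ∫ t in Ioi 0, g (t ^ δ⁻¹ / c) := by
  have hscale := integral_comp_mul_left_Ioi (fun u => (δ * u ^ (δ - 1)) • g (u / c)) 0 hc
  simp only [mul_div_cancel_left₀ _ hc.ne', mul_zero] at hscale
  rw [hscale, ← integral_comp_rpow_Ioi (fun t => g (t ^ δ⁻¹ / c)) hδ.ne']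
  congr 1
  refine setIntegral_congr_fun measurableSet_Ioi fun u (hu : 0 < u) => ?_
  rw [Real.rpow_rpow_inv hu.le hδ.ne', abs_of_pos hδ]

lemma integral_Ioi_indicator_Iio_one_const {E : Type*} [NormedAddCommGroup E]
    [NormedSpace ℝ E] [CompleteSpace E] (c : E) :
    ∫ t in Ioi (0 : ℝ), (Iio 1).indicator (fun _ => c) t = c := by
  rw [integral_indicator measurableSet_Iio, Measure.restrict_restrict measurableSet_Iio,
    Iio_inter_Ioi, setIntegral_const, Real.volume_real_Ioo_of_le zero_le_one, sub_zero, one_smul]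

lemma HasCompactSupport.exists_support_subset_prod_Iic {X E : Type*} [TopologicalSpace X]
    [Zero E] {f : X × ℝ → E} (hf : HasCompactSupport f) :
    ∃ K, IsCompact K ∧ ∃ R, Function.support f ⊆ K ×ˢ Iic R := by
  obtain ⟨R, hR⟩ := (hf.image continuous_snd).bddAbove
  refine ⟨_, hf.image continuous_fst, R, fun p hp => ?_⟩
  have hp' := subset_tsupport f hp
  exact ⟨mem_image_of_mem _ hp', hR (mem_image_of_mem _ hp')⟩

section

variable {X E : Type*} [NormedAddCommGroup E] {f : X × ℝ → E}

lemma stronglyMeasurable_comp_rpow_inv [TopologicalSpace X] [MeasurableSpace X]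
    [OpensMeasurableSpace X] (hf : Continuous f) (hfs : HasCompactSupport f) (δ : ℝ) :
    StronglyMeasurable fun p : X × ℝ => f (p.1, p.2 ^ δ⁻¹) :=
  (hfs.stronglyMeasurable_of_prod hf).comp_measurable
    (measurable_fst.prodMk (measurable_snd.pow_const _))

lemma norm_comp_rpow_inv_le_indicator {K : Set X} {R C : ℝ}
    (hKR : Function.support f ⊆ K ×ˢ Iic R) (hR : 1 ≤ R) (hC : ∀ p, ‖f p‖ ≤ C) {δ : ℝ}
    (hδ : δ ∈ Ioc 0 1) {p : X × ℝ} (hp : 0 < p.2) :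
    ‖f (p.1, p.2 ^ δ⁻¹)‖ ≤ (K ×ˢ Ioc 0 R).indicator (fun _ => C) p := by
  by_cases hfp : f (p.1, p.2 ^ δ⁻¹) = 0
  · rw [hfp, norm_zero]
    exact indicator_nonneg (fun _ _ => (norm_nonneg _).trans (hC p)) p
  · obtain ⟨hK, hRp⟩ := hKR hfp
    have hpK : p ∈ K ×ˢ Ioc 0 R := ⟨hK, hp, Real.le_of_rpow_inv_le hδ hR hRp⟩
    rw [indicator_of_mem hpK]
    exact hC _

lemma tendsto_comp_rpow_inv_nhdsGT_zero [TopologicalSpace X] (hf : Continuous f)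
    (hfs : HasCompactSupport f) {p : X × ℝ} (hp0 : 0 < p.2) (hp1 : p.2 ≠ 1) :
    Tendsto (fun δ : ℝ => f (p.1, p.2 ^ δ⁻¹)) (𝓝[>] 0)
      (𝓝 ((Iio 1).indicator (fun _ => f (p.1, 0)) p.2)) := by
  rcases hp1.lt_or_gt with hlt | hgt
  · rw [indicator_of_mem (mem_Iio.2 hlt)]
    exact (hf.tendsto _).comp
      (tendsto_const_nhds.prodMk_nhds (tendsto_rpow_inv_nhdsGT_zero_of_lt_one hp0.le hlt))
  · obtain ⟨K, -, R, hKR⟩ := hfs.exists_support_subset_prod_Iic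
    rw [indicator_of_notMem (notMem_Iio.2 hgt.le)]
    refine tendsto_const_nhds.congr' ?_
    filter_upwards [(tendsto_rpow_inv_nhdsGT_zero_of_one_lt hgt).eventually_gt_atTop R]
      with δ hδ
    have hout : (p.1, p.2 ^ δ⁻¹) ∉ Function.support f := fun hmem => hδ.not_ge (hKR hmem).2
    exact (Function.notMem_support.1 hout).symm

lemma ae_prod_restrict_Ioi_snd_pos_and_ne_one [MeasurableSpace X] (μ : Measure X) [SFinite μ] :
    ∀ᵐ p ∂μ.prod (volume.restrict (Ioi (0 : ℝ))), 0 < p.2 ∧ p.2 ≠ 1 :=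
  Measure.quasiMeasurePreserving_snd.ae (p := fun t : ℝ => 0 < t ∧ t ≠ 1) <| by
    filter_upwards [ae_restrict_mem measurableSet_Ioi, ae_restrict_of_ae (volume.ae_ne (1 : ℝ))]
      with t ht0 ht1 using ⟨ht0, ht1⟩

lemma exists_integrable_bound_comp_rpow_inv [TopologicalSpace X] [T2Space X] [MeasurableSpace X]
    [OpensMeasurableSpace X] {μ : Measure X} [IsFiniteMeasureOnCompacts μ] [SFinite μ]
    (hf : Continuous f) (hfs : HasCompactSupport f) :
    ∃ bound : X × ℝ → ℝ, Integrable bound (μ.prod (volume.restrict (Ioi 0))) ∧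
      ∀ᵐ p ∂μ.prod (volume.restrict (Ioi 0)), ∀ δ ∈ Ioc (0 : ℝ) 1,
        ‖f (p.1, p.2 ^ δ⁻¹)‖ ≤ bound p := by
  obtain ⟨K, hK, R, hKR⟩ := hfs.exists_support_subset_prod_Iic
  have hKR' : Function.support f ⊆ K ×ˢ Iic (max R 1) :=
    hKR.trans (prod_mono subset_rfl (Iic_subset_Iic.2 (le_max_left _ _)))
  obtain ⟨C, hC⟩ := hf.bounded_above_of_compact_support hfs
  refine ⟨(K ×ˢ Ioc 0 (max R 1)).indicator fun _ => C, ?_, ?_⟩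
  · refine (integrable_indicator_iff (hK.measurableSet.prod measurableSet_Ioc)).2
      (integrableOn_const ?_)
    rw [Measure.prod_prod, Measure.restrict_apply measurableSet_Ioc]
    exact ENNReal.mul_ne_top hK.measure_lt_top.ne
      (measure_mono inter_subset_left |>.trans_lt measure_Ioc_lt_top).ne
  · filter_upwards [ae_prod_restrict_Ioi_snd_pos_and_ne_one μ] with p hp δ hδ
    exact norm_comp_rpow_inv_le_indicator hKR' (le_max_right _ _) hC hδ hp.1

theorem tendsto_integral_integral_Ioi_comp_rpow_inv [TopologicalSpace X] [T2Space X]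
    [MeasurableSpace X] [OpensMeasurableSpace X] {μ : Measure X} [IsFiniteMeasureOnCompacts μ]
    [SFinite μ] [NormedSpace ℝ E] [CompleteSpace E] (hf : Continuous f)
    (hfs : HasCompactSupport f) :
    Tendsto (fun δ : ℝ => ∫ x, (∫ t in Ioi 0, f (x, t ^ δ⁻¹)) ∂μ) (𝓝[>] 0)
      (𝓝 (∫ x, f (x, 0) ∂μ)) := by
  set ν := μ.prod (volume.restrict (Ioi (0 : ℝ)))
  set g : X × ℝ → E := fun p => (Iio 1).indicator (fun _ => f (p.1, 0)) p.2
  obtain ⟨bound, hbound, hF_le⟩ := exists_integrable_bound_comp_rpow_inv (μ := μ) hf hfs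
  have hlim : ∀ᵐ p ∂ν, Tendsto (fun δ : ℝ => f (p.1, p.2 ^ δ⁻¹)) (𝓝[>] 0) (𝓝 (g p)) := by
    filter_upwards [ae_prod_restrict_Ioi_snd_pos_and_ne_one μ] with p hp
    exact tendsto_comp_rpow_inv_nhdsGT_zero hf hfs hp.1 hp.2
  have hF_meas (δ : ℝ) : AEStronglyMeasurable (fun p : X × ℝ => f (p.1, p.2 ^ δ⁻¹)) ν :=
    (stronglyMeasurable_comp_rpow_inv hf hfs δ).aestronglyMeasurable
  have hIoc : Ioc (0 : ℝ) 1 ∈ 𝓝[>] 0 := Ioc_mem_nhdsGT one_pos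
  have hg_int : Integrable g ν := by
    refine hbound.mono' (aestronglyMeasurable_of_tendsto_ae _ hF_meas hlim) ?_
    filter_upwards [hlim, hF_le] with p hp hp_le
    exact le_of_tendsto hp.norm (eventually_of_mem hIoc hp_le)
  have hg : ∫ p, g p ∂ν = ∫ x, f (x, 0) ∂μ := by
    refine (integral_prod g hg_int).trans (integral_congr_ae (ae_of_all _ fun x => ?_))
    exact integral_Ioi_indicator_Iio_one_const (f (x, 0))
  rw [← hg]
  refine (tendsto_integral_filter_of_dominated_convergence bound (Eventually.of_forall hF_meas)
    (eventually_of_mem hIoc fun δ hδ => hF_le.mono fun p hp => hp δ hδ) hbound hlim).congr' ?_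
  filter_upwards [hIoc] with δ hδ
  exact integral_prod _ (hbound.mono' (hF_meas δ) (hF_le.mono fun p hp => hp δ hδ))

end

/-- For every continuous compactly supported `f : ℝ² → ℝ`, the measures
`L^δ` on the upper half-plane with density `δ·(2y)^{δ−1}` converge vaguely, as `δ → 0⁺`,
to one half of Lebesgue measure on the real line:
`∫_ℝ ∫_{(0,∞)} f(x,y)·δ·(2y)^{δ−1} dy dx → (1/2)·∫_ℝ f(x,0) dx`. -/
theorem approx_boundary_lebesgue (f : ℝ × ℝ → ℝ) (hf : Continuous f)
    (hsupp : HasCompactSupport f) :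
    Tendsto (fun δ : ℝ => ∫ x : ℝ, ∫ y in Set.Ioi (0 : ℝ), f (x, y) * (δ * (2 * y) ^ (δ - 1)))
      (𝓝[>] (0 : ℝ)) (𝓝 ((1 / 2) * ∫ x : ℝ, f (x, 0))) := by
  have hhalf : HasCompactSupport fun p : ℝ × ℝ => f (p.1, p.2 / 2) :=
    hsupp.comp_homeomorph ((Homeomorph.refl ℝ).prodCongr (Homeomorph.mulRight₀ 2⁻¹ (by norm_num)))
  have hlim := (tendsto_integral_integral_Ioi_comp_rpow_inv (μ := volume)
    (by fun_prop) hhalf).const_mul (1 / 2)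
  simp only [zero_div] at hlim
  refine hlim.congr' ?_
  filter_upwards [self_mem_nhdsWithin] with δ (hδ : 0 < δ)
  rw [← integral_const_mul]
  refine integral_congr_ae (ae_of_all _ fun x => ?_)
  calc (1 / 2) * ∫ t in Ioi 0, f (x, t ^ δ⁻¹ / 2)
      = ∫ y in Ioi 0, (δ * (2 * y) ^ (δ - 1)) • f (x, y) := by
        rw [integral_Ioi_mul_rpow_sub_one_smul _ hδ two_pos, smul_eq_mul, one_div]
    _ = ∫ y in Ioi 0, f (x, y) * (δ * (2 * y) ^ (δ - 1)) := by
        simp_rw [smul_eq_mul, mul_comm]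
end

section
/- Let (X, 𝒜, λ) be a measure space, ρ : X → (0,1) a measurable function, p ∈ (−1, 0), and f : X → [0,∞) measurable with ∫ f dλ < ∞. Suppose that u^p · ∫_{{ρ < u}} f dλ → L as u → 0⁺, for some L ∈ [0,∞). Then δ · ∫ f · ρ^{p+δ} dλ → (−p)·L as δ → 0⁺ (where δ ranges over (0, −p)). -/
open MeasureTheory Filter Topology Set

/-!
Push `f · λ` forward under `ρ` to a finite measure `μ` on `(0, 1)`, so that
`F u := ∫_{ρ < u} f dλ = μ (Iio u)`. For `q < 0`, the identity `t ^ q = 1 + ∫_t^1 (-q) u ^ (q - 1) du`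
and Tonelli give `∫ t ^ q dμ = μ ℝ + (-q) ∫_0^1 u ^ (q - 1) F u du`. For `q = p + δ` the
substitution `u = t ^ (1/δ)` turns `δ ∫_0^1 u ^ (p + δ - 1) F u du` into `∫_0^1 G (t ^ (1/δ)) dt`
with `G u = u ^ p F u`. The hypothesis makes `G` bounded with `G u → L` as `u → 0⁺`, and
`t ^ (1/δ) → 0⁺` as `δ → 0⁺`, so dominated convergence gives the limit `L`, while `δ μ ℝ → 0`.
-/

lemma lintegral_Ioo_ofReal_neg_mul_rpow_sub_one {q t : ℝ} (hq : q < 0) (ht₀ : 0 < t)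
    (ht₁ : t ≤ 1) :
    ∫⁻ u in Ioo t 1, ENNReal.ofReal (-q * u ^ (q - 1)) = ENNReal.ofReal (t ^ q - 1) := by
  have hcont : ContinuousOn (fun u : ℝ => -q * u ^ (q - 1)) (Icc t 1) := fun u hu =>
    (continuousAt_const.mul (Real.continuousAt_rpow_const u _
      (Or.inl (ht₀.trans_le hu.1).ne'))).continuousWithinAt
  rw [← ofReal_integral_eq_lintegral_ofReal (hcont.integrableOn_Icc.mono_set Ioo_subset_Icc_self)
    (ae_restrict_of_forall_mem measurableSet_Ioo fun u hu =>
      mul_nonneg (neg_nonneg.2 hq.le) (Real.rpow_nonneg (ht₀.trans hu.1).le _)),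
    ← integral_Ioc_eq_integral_Ioo, ← intervalIntegral.integral_of_le ht₁,
    intervalIntegral.integral_const_mul, integral_rpow (Or.inr ⟨by linarith, by
      simp [uIcc_of_le ht₁, ht₀.not_ge]⟩)]
  congr 1
  rw [sub_add_cancel, Real.one_rpow]
  field_simp [hq.ne]
  ring

theorem lintegral_ofReal_rpow_eq_add_lintegral (μ : Measure ℝ) [SFinite μ]
    (hμ : ∀ᵐ t ∂μ, t ∈ Ioo 0 1) {q : ℝ} (hq : q < 0) :
    ∫⁻ t, ENNReal.ofReal (t ^ q) ∂μ
      = μ univ + ∫⁻ u in Ioo 0 1, ENNReal.ofReal (-q * u ^ (q - 1)) * μ (Iio u) := by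
  set g : ℝ → ENNReal := fun u => ENNReal.ofReal (-q * u ^ (q - 1))
  -- `if t < u then g u else 0` is `(Ioi t).indicator g u` as a function of `u` and
  -- `(Iio u).indicator (fun _ => g u) t` as a function of `t`; Tonelli passes between the two.
  have hpoint : ∀ t ∈ Ioo (0 : ℝ) 1, ENNReal.ofReal (t ^ q)
      = 1 + ∫⁻ u in Ioo 0 1, if t < u then g u else 0 := by
    intro t ht
    change _ = 1 + ∫⁻ u in Ioo 0 1, (Ioi t).indicator g u
    rw [lintegral_indicator measurableSet_Ioi, Measure.restrict_restrict measurableSet_Ioi,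
      Ioi_inter_Ioo, max_eq_left ht.1.le, lintegral_Ioo_ofReal_neg_mul_rpow_sub_one hq ht.1 ht.2.le,
      ← ENNReal.ofReal_one, ← ENNReal.ofReal_add zero_le_one
        (sub_nonneg.2 (Real.one_le_rpow_of_pos_of_le_one_of_nonpos ht.1 ht.2.le hq.le)),
      add_sub_cancel]
  have hmeas : Measurable (Function.uncurry fun t u : ℝ => if t < u then g u else 0) :=
    Measurable.ite (measurableSet_lt measurable_fst measurable_snd) (by fun_prop) measurable_const
  rw [lintegral_congr_ae (hμ.mono hpoint), lintegral_add_left measurable_const, lintegral_const,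
    one_mul, lintegral_lintegral_swap hmeas.aemeasurable]
  congr 1
  exact lintegral_congr fun u => lintegral_indicator_const (s := Iio u) measurableSet_Iio (g u)

theorem integral_rpow_eq_add_integral (μ : Measure ℝ) [IsFiniteMeasure μ]
    (hμ : ∀ᵐ t ∂μ, t ∈ Ioo 0 1) {q : ℝ} (hq : q < 0)
    (hint : IntegrableOn (fun u => u ^ (q - 1) * μ.real (Iio u)) (Ioo 0 1)) :
    ∫ t, t ^ q ∂μ = μ.real univ + -q * ∫ u in Ioo 0 1, u ^ (q - 1) * μ.real (Iio u) := by
  have hlayer : ∫⁻ u in Ioo 0 1, ENNReal.ofReal (-q * u ^ (q - 1)) * μ (Iio u)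
      = ∫⁻ u in Ioo 0 1, ENNReal.ofReal (-q * (u ^ (q - 1) * μ.real (Iio u))) := by
    refine setLIntegral_congr_fun measurableSet_Ioo fun u hu => ?_
    rw [← mul_assoc, ENNReal.ofReal_mul (mul_nonneg (neg_nonneg.2 hq.le)
      (Real.rpow_nonneg hu.1.le _)), ofReal_measureReal]
  have hnonneg : ∀ᵐ u ∂volume.restrict (Ioo (0 : ℝ) 1), 0 ≤ -q * (u ^ (q - 1) * μ.real (Iio u)) :=
    ae_restrict_of_forall_mem measurableSet_Ioo fun u hu =>
      mul_nonneg (neg_nonneg.2 hq.le) (mul_nonneg (Real.rpow_nonneg hu.1.le _) measureReal_nonneg)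
  rw [integral_eq_lintegral_of_nonneg_ae (hμ.mono fun t ht => Real.rpow_nonneg ht.1.le q)
      (by fun_prop), lintegral_ofReal_rpow_eq_add_lintegral μ hμ hq, hlayer,
    ENNReal.toReal_add (measure_ne_top μ univ) ((hint.const_mul (-q)).lintegral_lt_top.ne),
    ← integral_const_mul, integral_eq_lintegral_of_nonneg_ae hnonneg
      (hint.const_mul (-q)).aestronglyMeasurable, measureReal_def]

lemma exists_forall_rpow_mul_le_of_tendsto {F : ℝ → ℝ} {p C L : ℝ} (hp : p ≤ 0)
    (hC : 0 ≤ C) (hF : ∀ u, F u ≤ C)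
    (hlim : Tendsto (fun u => u ^ p * F u) (𝓝[>] 0) (𝓝 L)) :
    ∃ M, ∀ u > 0, u ^ p * F u ≤ M := by
  obtain ⟨ε, hε, hnear⟩ := mem_nhdsGT_iff_exists_Ioo_subset.1
    (hlim.eventually_lt_const (lt_add_one L))
  refine ⟨max (L + 1) (ε ^ p * C), fun u hu => ?_⟩
  rcases lt_or_ge u ε with huε | huε
  · exact le_max_of_le_left (hnear ⟨hu, huε⟩).le
  · refine le_max_of_le_right ?_
    calc u ^ p * F u ≤ u ^ p * C := mul_le_mul_of_nonneg_left (hF u) (Real.rpow_nonneg hu.le p)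
      _ ≤ ε ^ p * C := mul_le_mul_of_nonneg_right (Real.rpow_le_rpow_of_nonpos hε huε hp) hC

theorem integral_Ioo_comp_rpow_inv {E : Type*} [NormedAddCommGroup E] [NormedSpace ℝ E]
    (g : ℝ → E) {δ : ℝ} (hδ : 0 < δ) :
    ∫ t in Ioo 0 1, g (t ^ δ⁻¹) = ∫ u in Ioo 0 1, (δ * u ^ (δ - 1)) • g u := by
  have himage : (· ^ δ) '' Ioo (0 : ℝ) 1 = Ioo 0 1 := by
    rw [(Real.continuous_rpow_const hδ.le).continuousOn.image_Ioo_of_strictMonoOn zero_le_one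
      ((Real.strictMonoOn_rpow_Ici_of_exponent_pos hδ).mono Icc_subset_Ici_self),
      Real.zero_rpow hδ.ne', Real.one_rpow]
  have hsubst := integral_image_eq_integral_abs_deriv_smul (measurableSet_Ioo (a := 0) (b := 1))
    (fun u hu => (Real.hasDerivAt_rpow_const (Or.inl hu.1.ne')).hasDerivWithinAt)
    ((Real.strictMonoOn_rpow_Ici_of_exponent_pos hδ).injOn.mono
      (Ioo_subset_Icc_self.trans Icc_subset_Ici_self)) fun t => g (t ^ δ⁻¹)
  rw [himage] at hsubst
  rw [hsubst]
  refine setIntegral_congr_fun measurableSet_Ioo fun u hu => ?_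
  rw [abs_of_nonneg (by have := hu.1; positivity), Real.rpow_rpow_inv hu.1.le hδ.ne']

lemma tendsto_rpow_inv_nhdsGT_zero {t : ℝ} (ht : t ∈ Ioo 0 1) :
    Tendsto (fun δ : ℝ => t ^ δ⁻¹) (𝓝[>] 0) (𝓝[>] 0) :=
  tendsto_nhdsWithin_iff.2 ⟨(tendsto_rpow_atTop_of_base_lt_one t (by linarith [ht.1]) ht.2).comp
    tendsto_inv_nhdsGT_zero, Eventually.of_forall fun _ => Real.rpow_pos_of_pos ht.1 _⟩

theorem tendsto_integral_Ioo_comp_rpow_inv {E : Type*} [NormedAddCommGroup E] [NormedSpace ℝ E]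
    [CompleteSpace E]
    {G : ℝ → E} {L : E} {M : ℝ} (hG : StronglyMeasurable G) (hM : ∀ u ∈ Ioo 0 1, ‖G u‖ ≤ M)
    (hlim : Tendsto G (𝓝[>] 0) (𝓝 L)) :
    Tendsto (fun δ : ℝ => ∫ t in Ioo 0 1, G (t ^ δ⁻¹)) (𝓝[>] 0) (𝓝 L) := by
  have hdom := tendsto_integral_filter_of_dominated_convergence (l := 𝓝[>] (0 : ℝ))
    (μ := volume.restrict (Ioo (0 : ℝ) 1)) (F := fun δ t => G (t ^ δ⁻¹)) (fun _ => M)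
    (Eventually.of_forall fun δ => (hG.comp_measurable (by fun_prop)).aestronglyMeasurable)
    (eventually_mem_nhdsWithin.mono fun δ (hδ : 0 < δ) =>
      ae_restrict_of_forall_mem measurableSet_Ioo fun t ht =>
        hM _ ⟨Real.rpow_pos_of_pos ht.1 _, Real.rpow_lt_one ht.1.le ht.2 (inv_pos.2 hδ)⟩)
    (integrableOn_const (by simp))
    (ae_restrict_of_forall_mem measurableSet_Ioo fun t ht =>
      hlim.comp (tendsto_rpow_inv_nhdsGT_zero ht))
  simpa [setIntegral_const] using hdom

theorem tendsto_mul_integral_rpow_add (μ : Measure ℝ) [IsFiniteMeasure μ]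
    (hμ : ∀ᵐ t ∂μ, t ∈ Ioo 0 1) {p L : ℝ} (hp : p < 0)
    (hlim : Tendsto (fun u => u ^ p * μ.real (Iio u)) (𝓝[>] 0) (𝓝 L)) :
    Tendsto (fun δ => δ * ∫ t, t ^ (p + δ) ∂μ) (𝓝[>] 0) (𝓝 (-p * L)) := by
  set G : ℝ → ℝ := fun u => u ^ p * μ.real (Iio u) with hG
  obtain ⟨M, hM⟩ := exists_forall_rpow_mul_le_of_tendsto hp.le measureReal_nonneg
    (fun u => measureReal_mono (subset_univ (Iio u))) hlim
  have hG0 : ∀ u > 0, 0 ≤ G u := fun u hu => mul_nonneg (Real.rpow_nonneg hu.le _) measureReal_nonneg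
  have hF : Measurable fun u => μ.real (Iio u) :=
    Monotone.measurable fun a b hab => measureReal_mono (Iio_subset_Iio hab)
  have hmeas : Measurable G := (measurable_id.pow_const p).mul hF
  have hsplit : ∀ δ ∈ Ioo 0 (-p), δ * ∫ t, t ^ (p + δ) ∂μ
      = δ * μ.real univ + -(p + δ) * ∫ t in Ioo 0 1, G (t ^ δ⁻¹) := by
    intro δ hδ
    have hfactor : ∀ u ∈ Ioo (0 : ℝ) 1, u ^ (p + δ - 1) * μ.real (Iio u) = u ^ (δ - 1) * G u :=
      fun u hu => by rw [show p + δ - 1 = δ - 1 + p by ring, Real.rpow_add hu.1, hG]; ring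
    have hint : IntegrableOn (fun u => u ^ (p + δ - 1) * μ.real (Iio u)) (Ioo 0 1) := by
      refine (((intervalIntegral.integrableOn_Ioo_rpow_iff (s := δ - 1) zero_lt_one).2
        (by linarith [hδ.1])).mul_const M).mono'
        ((measurable_id.pow_const _).mul hF).aestronglyMeasurable
        (ae_restrict_of_forall_mem measurableSet_Ioo fun u hu => ?_)
      rw [hfactor u hu, Real.norm_of_nonneg (mul_nonneg (Real.rpow_nonneg hu.1.le _) (hG0 u hu.1))]
      exact mul_le_mul_of_nonneg_left (hM u hu.1) (Real.rpow_nonneg hu.1.le _)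
    have hsubst : ∫ t in Ioo 0 1, G (t ^ δ⁻¹)
        = δ * ∫ u in Ioo 0 1, u ^ (p + δ - 1) * μ.real (Iio u) := by
      rw [integral_Ioo_comp_rpow_inv G hδ.1, ← integral_const_mul]
      refine setIntegral_congr_fun measurableSet_Ioo fun u hu => ?_
      rw [hfactor u hu, smul_eq_mul]
      ring
    rw [integral_rpow_eq_add_integral μ hμ (by linarith [hδ.2]) hint, hsubst]
    ring
  have hconv : Tendsto (fun δ : ℝ => ∫ t in Ioo 0 1, G (t ^ δ⁻¹)) (𝓝[>] 0) (𝓝 L) :=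
    tendsto_integral_Ioo_comp_rpow_inv hmeas.stronglyMeasurable
      (fun u hu => (Real.norm_of_nonneg (hG0 u hu.1)).trans_le (hM u hu.1)) hlim
  have hδ : Tendsto (fun δ : ℝ => δ) (𝓝[>] 0) (𝓝 0) := nhdsWithin_le_nhds
  have hlimit : Tendsto (fun δ => δ * μ.real univ + -(p + δ) * ∫ t in Ioo 0 1, G (t ^ δ⁻¹))
      (𝓝[>] 0) (𝓝 (0 * μ.real univ + -(p + 0) * L)) :=
    (hδ.mul_const _).add ((hδ.const_add p).neg.mul hconv)
  rw [zero_mul, zero_add, add_zero] at hlimit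
  exact hlimit.congr' (eventually_of_mem (Ioo_mem_nhdsGT (neg_pos.2 hp))
    fun δ hδ => (hsplit δ hδ).symm)

theorem onesided_minkowski_approx_general {X : Type*} [MeasurableSpace X] (lam : Measure X)
    (ρ : X → ℝ) (hρ : Measurable ρ) (hρ01 : ∀ x, ρ x ∈ Set.Ioo (0 : ℝ) 1)
    (p : ℝ) (hp : p ∈ Set.Ioo (-1 : ℝ) 0)
    (f : X → ℝ) (hf0 : ∀ x, 0 ≤ f x) (hfi : Integrable f lam)
    (L : ℝ)
    (hlim : Tendsto (fun u : ℝ => u ^ p * ∫ x in {x | ρ x < u}, f x ∂lam)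
      (𝓝[>] (0 : ℝ)) (𝓝 L)) :
    Tendsto (fun δ : ℝ => δ * ∫ x, f x * ρ x ^ (p + δ) ∂lam)
      (𝓝[Set.Ioo (0 : ℝ) (-p)] (0 : ℝ)) (𝓝 (-p * L)) := by
  set ν := lam.withDensity fun x => ENNReal.ofReal (f x)
  have : IsFiniteMeasure ν := isFiniteMeasure_withDensity_ofReal hfi.2
  have hρν : ∀ᵐ t ∂ν.map ρ, t ∈ Ioo 0 1 :=
    (ae_map_iff hρ.aemeasurable measurableSet_Ioo).2 (ae_of_all _ hρ01)
  have hintegral : ∀ q : ℝ, ∫ t, t ^ q ∂ν.map ρ = ∫ x, f x * ρ x ^ q ∂lam := by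
    intro q
    rw [integral_map hρ.aemeasurable (by fun_prop), integral_withDensity_eq_integral_toReal_smul₀
      hfi.aemeasurable.ennreal_ofReal (ae_of_all _ fun _ => ENNReal.ofReal_lt_top)]
    simp only [ENNReal.toReal_ofReal (hf0 _), smul_eq_mul]
  have hmeasure : ∀ u, (ν.map ρ).real (Iio u) = ∫ x in {x | ρ x < u}, f x ∂lam := by
    intro u
    rw [map_measureReal_apply hρ measurableSet_Iio, measureReal_def,
      withDensity_apply _ (hρ measurableSet_Iio), integral_eq_lintegral_of_nonneg_ae
        (ae_of_all _ hf0) hfi.aestronglyMeasurable.restrict]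
    rfl
  simp_rw [← hmeasure] at hlim
  simp_rw [← hintegral]
  exact (tendsto_mul_integral_rpow_add _ hρν hp.2 hlim).mono_left
    (nhdsWithin_mono _ Ioo_subset_Ioi_self)

/-- If `u^p · ∫_{ρ < u} f dλ → L` as `u → 0⁺` (with `ρ` taking values in `(0,1)`,
`p ∈ (−1,0)`, `f ≥ 0` integrable), then `δ · ∫ f · ρ^{p+δ} dλ → (−p)·L` as `δ → 0⁺`
(with `δ` ranging over `(0, −p)`). -/
theorem onesided_minkowski_approx {X : Type*} [MeasurableSpace X] (lam : Measure X)
    (ρ : X → ℝ) (hρ : Measurable ρ) (hρ01 : ∀ x, ρ x ∈ Set.Ioo (0 : ℝ) 1)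
    (p : ℝ) (hp : p ∈ Set.Ioo (-1 : ℝ) 0)
    (f : X → ℝ) (hf : Measurable f) (hf0 : ∀ x, 0 ≤ f x) (hfi : Integrable f lam)
    (L : ℝ) (hL : 0 ≤ L)
    (hlim : Tendsto (fun u : ℝ => u ^ p * ∫ x in {x | ρ x < u}, f x ∂lam)
      (𝓝[>] (0 : ℝ)) (𝓝 L)) :
    Tendsto (fun δ : ℝ => δ * ∫ x, f x * ρ x ^ (p + δ) ∂lam)
      (𝓝[Set.Ioo (0 : ℝ) (-p)] (0 : ℝ)) (𝓝 (-p * L)) :=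
  onesided_minkowski_approx_general lam ρ hρ hρ01 p hp f hf0 hfi L hlim
end

section
/- Define, for z ≠ w in the open upper half-plane H, the kernel G(z,w) = −log|z−w| − log|z−w̄| + 2·log|z|·1_{|z|≥1} + 2·log|w|·1_{|w|≥1}. Then for every β̃ ∈ (0, 1/2) and every compact set K ⊂ closure(H), sup over δ ∈ (0,1) of ∬_{(K∩H)×(K∩H)} e^{β̃·G(z,w)} · δ·(2·Im z)^{δ−1} · δ·(2·Im w)^{δ−1} dz dw is finite, where dz, dw denote two-dimensional Lebesgue measure. -/
/-!
Both `|z - w|` and `|z - w̄|` are at least `|Re z - Re w|`, so on the disk of radius `R ≥ 1`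
`exp (β G(z, w)) ≤ R ^ (4β) |Re z - Re w| ^ (-2β)`, which is integrable in `Re w` because
`2β < 1`. The density `δ (2 Im w) ^ (δ - 1)` integrates over `Im w ∈ (0, R]` to
`(2R) ^ δ / 2 ≤ R` whatever `δ ∈ (0, 1]`, so Tonelli on the rectangle `[-R, R] × (0, R]`
bounds the energy independently of `δ`.
-/

open MeasureTheory Filter Topology Set
open scoped ENNReal

/-- The covariance kernel of the free-boundary GFF on the upper half-plane,
normalized to have zero average on the upper unit semicircle:
`G(z,w) = −log|z−w| − log|z−w̄| + 2·log|z|·1_{|z|≥1} + 2·log|w|·1_{|w|≥1}`. -/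
noncomputable def freeGFFKernel (z w : ℂ) : ℝ :=
  -Real.log (‖z - w‖) - Real.log (‖z - (starRingEnd ℂ) w‖)
    + 2 * Real.log (‖z‖) * (if 1 ≤ ‖z‖ then 1 else 0)
    + 2 * Real.log (‖w‖) * (if 1 ≤ ‖w‖ then 1 else 0)

namespace Complex

theorem setLIntegral_reProdIm_mul {s t : Set ℝ} {f g : ℝ → ℝ≥0∞}
    (hf : AEMeasurable f (volume.restrict s)) (hg : AEMeasurable g (volume.restrict t)) :
    ∫⁻ z in s ×ℂ t, f z.re * g z.im = (∫⁻ x in s, f x) * ∫⁻ y in t, g y := by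
  have h := volume_preserving_equiv_real_prod.setLIntegral_comp_preimage_emb
    measurableEquivRealProd.measurableEmbedding (fun p : ℝ × ℝ ↦ f p.1 * g p.2) (s ×ˢ t)
  rw [Measure.volume_eq_prod, ← Measure.prod_restrict, lintegral_prod_mul hf hg] at h
  exact h

theorem volume_reProdIm (s t : Set ℝ) : volume (s ×ℂ t) = volume s * volume t := by
  simpa using setLIntegral_reProdIm_mul (s := s) (t := t) (f := 1) (g := 1)
    aemeasurable_const aemeasurable_const

theorem ae_re_ne (c : ℝ) : ∀ᵐ z : ℂ, z.re ≠ c := by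
  have h : {z : ℂ | ¬z.re ≠ c} = {c} ×ℂ univ := by ext z; simp [mem_reProdIm]
  rw [ae_iff, h, volume_reProdIm, Real.volume_singleton, zero_mul]

end Complex

theorem intervalIntegrable_abs_rpow {r : ℝ} (hr : -1 < r) (a b : ℝ) :
    IntervalIntegrable (fun s : ℝ ↦ |s| ^ r) volume a b := by
  have from_zero_of_nonneg : ∀ t, 0 ≤ t → IntervalIntegrable (fun s : ℝ ↦ |s| ^ r) volume 0 t :=
    fun t ht ↦ (intervalIntegral.intervalIntegrable_rpow' hr).congr fun s hs ↦ by
      rw [uIoc_of_le ht] at hs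
      simp [abs_of_pos hs.1]
  have from_zero : ∀ t, IntervalIntegrable (fun s : ℝ ↦ |s| ^ r) volume 0 t := by
    intro t
    rcases le_total 0 t with ht | ht
    · exact from_zero_of_nonneg t ht
    · have h := from_zero_of_nonneg (-t) (by linarith)
      rw [IntervalIntegrable.iff_comp_neg] at h
      simpa using h
  exact (from_zero a).symm.trans (from_zero b)

theorem setLIntegral_Icc_abs_rpow_lt_top {r : ℝ} (hr : -1 < r) (a : ℝ) :
    ∫⁻ s in Icc (-a) a, ENNReal.ofReal (|s| ^ r) < ∞ := by
  rcases le_or_gt (-a) a with ha | ha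
  · exact ((intervalIntegrable_iff_integrableOn_Icc_of_le ha).mp
      (intervalIntegrable_abs_rpow hr _ _)).lintegral_lt_top
  · simp [Icc_eq_empty_of_lt ha]

theorem setLIntegral_Icc_comp_sub_le (f : ℝ → ℝ≥0∞) {x R : ℝ} (hx : |x| ≤ R) :
    ∫⁻ u in Icc (-R) R, f (x - u) ≤ ∫⁻ s in Icc (-(2 * R)) (2 * R), f s := by
  have hsub : Icc (-R) R ⊆ (x - ·) ⁻¹' Icc (-(2 * R)) (2 * R) := by
    intro u hu
    have := abs_le.mp hx
    simp only [mem_preimage, mem_Icc] at hu ⊢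
    constructor <;> linarith [hu.1, hu.2]
  calc ∫⁻ u in Icc (-R) R, f (x - u)
      ≤ ∫⁻ u in (x - ·) ⁻¹' Icc (-(2 * R)) (2 * R), f (x - u) := lintegral_mono_set hsub
    _ = ∫⁻ s in Icc (-(2 * R)) (2 * R), f s :=
      (Measure.measurePreserving_sub_left volume x).setLIntegral_comp_preimage_emb
        (MeasurableEquiv.subLeft x).measurableEmbedding f _

/-- The density of `L^δ_ℝ` with respect to Lebesgue measure, as a function of `Im z`. -/
noncomputable def boundaryDensity (δ y : ℝ) : ℝ := δ * (2 * y) ^ (δ - 1)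

theorem boundaryDensity_nonneg {δ y : ℝ} (hδ : 0 ≤ δ) (hy : 0 ≤ y) : 0 ≤ boundaryDensity δ y :=
  mul_nonneg hδ (Real.rpow_nonneg (by linarith) _)

theorem measurable_boundaryDensity (δ : ℝ) : Measurable (boundaryDensity δ) := by
  unfold boundaryDensity
  fun_prop

theorem intervalIntegrable_boundaryDensity {δ : ℝ} (hδ : 0 < δ) (a b : ℝ) :
    IntervalIntegrable (boundaryDensity δ) volume a b := by
  have h := (intervalIntegral.intervalIntegrable_rpow' (a := 2 * a) (b := 2 * b)
    (r := δ - 1) (by linarith)).comp_mul_left (c := 2)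
  simp only [mul_div_cancel_left₀ _ (two_ne_zero' ℝ)] at h
  exact h.const_mul δ

theorem integral_boundaryDensity {δ : ℝ} (hδ : 0 < δ) (R : ℝ) :
    ∫ y in (0)..R, boundaryDensity δ y = (2 * R) ^ δ / 2 := by
  simp only [boundaryDensity, intervalIntegral.integral_const_mul,
    intervalIntegral.integral_comp_mul_left (fun y ↦ y ^ (δ - 1)) two_ne_zero,
    integral_rpow (Or.inl (by linarith : -1 < δ - 1)), sub_add_cancel, mul_zero,
    Real.zero_rpow hδ.ne', sub_zero, smul_eq_mul]
  field_simp

theorem setLIntegral_boundaryDensity_le {δ R : ℝ} (hδ : 0 < δ) (hδ1 : δ ≤ 1) (hR : 1 / 2 ≤ R) :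
    ∫⁻ y in Ioc 0 R, ENNReal.ofReal (boundaryDensity δ y) ≤ ENNReal.ofReal R := by
  have hR0 : 0 ≤ R := by linarith
  rw [← ofReal_integral_eq_lintegral_ofReal
    ((intervalIntegrable_iff_integrableOn_Ioc_of_le hR0).mp
      (intervalIntegrable_boundaryDensity hδ 0 R))
    ((ae_restrict_mem measurableSet_Ioc).mono fun y hy ↦ boundaryDensity_nonneg hδ.le hy.1.le),
    ← intervalIntegral.integral_of_le hR0, integral_boundaryDensity hδ]
  gcongr
  linarith [Real.rpow_le_self_of_one_le (by linarith : (1 : ℝ) ≤ 2 * R) hδ1]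

theorem freeGFFKernel_le {R : ℝ} (hR : 1 ≤ R) {z w : ℂ} (hz : ‖z‖ ≤ R) (hw : ‖w‖ ≤ R)
    (hzw : z.re ≠ w.re) :
    freeGFFKernel z w ≤ 4 * Real.log R - 2 * Real.log |z.re - w.re| := by
  have hpos : 0 < |z.re - w.re| := abs_pos.mpr (sub_ne_zero.mpr hzw)
  have h_sub : Real.log |z.re - w.re| ≤ Real.log ‖z - w‖ :=
    Real.log_le_log hpos (by simpa using Complex.abs_re_le_norm (z - w))
  have h_sub_conj : Real.log |z.re - w.re| ≤ Real.log ‖z - (starRingEnd ℂ) w‖ :=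
    Real.log_le_log hpos (by simpa using Complex.abs_re_le_norm (z - (starRingEnd ℂ) w))
  have h_cutoff : ∀ u : ℂ, ‖u‖ ≤ R →
      2 * Real.log ‖u‖ * (if 1 ≤ ‖u‖ then 1 else 0) ≤ 2 * Real.log R := by
    intro u hu
    split_ifs with h
    · linarith [Real.log_le_log (by linarith) hu]
    · linarith [Real.log_nonneg hR]
  unfold freeGFFKernel
  linarith [h_cutoff z hz, h_cutoff w hw]

theorem exp_mul_freeGFFKernel_le {β R : ℝ} (hβ : 0 ≤ β) (hR : 1 ≤ R) {z w : ℂ}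
    (hz : ‖z‖ ≤ R) (hw : ‖w‖ ≤ R) (hzw : z.re ≠ w.re) :
    Real.exp (β * freeGFFKernel z w) ≤ R ^ (4 * β) * |z.re - w.re| ^ (-(2 * β)) := by
  have hpos : 0 < |z.re - w.re| := abs_pos.mpr (sub_ne_zero.mpr hzw)
  rw [Real.rpow_def_of_pos (by linarith), Real.rpow_def_of_pos hpos, ← Real.exp_add]
  gcongr
  nlinarith [freeGFFKernel_le hR hz hw hzw]

def upperHalfDisk (R : ℝ) : Set ℂ := Metric.closedBall 0 R ∩ {z | 0 < z.im}

theorem measurableSet_upperHalfDisk (R : ℝ) : MeasurableSet (upperHalfDisk R) :=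
  measurableSet_closedBall.inter (measurableSet_lt measurable_const Complex.measurable_im)

theorem norm_le_of_mem_upperHalfDisk {R : ℝ} {z : ℂ} (hz : z ∈ upperHalfDisk R) : ‖z‖ ≤ R :=
  mem_closedBall_zero_iff.mp hz.1

theorem upperHalfDisk_subset_reProdIm (R : ℝ) : upperHalfDisk R ⊆ Icc (-R) R ×ℂ Ioc 0 R := by
  intro z hz
  have hzR := norm_le_of_mem_upperHalfDisk hz
  exact ⟨abs_le.mp ((Complex.abs_re_le_norm z).trans hzR),
    hz.2, (le_abs_self _).trans ((Complex.abs_im_le_norm z).trans hzR)⟩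

theorem setLIntegral_upperHalfDisk_mul_boundaryDensity_le {δ R : ℝ} (hδ : 0 < δ) (hδ1 : δ ≤ 1)
    (hR : 1 / 2 ≤ R) {f : ℝ → ℝ≥0∞} (hf : AEMeasurable f (volume.restrict (Icc (-R) R))) :
    ∫⁻ w in upperHalfDisk R, f w.re * ENNReal.ofReal (boundaryDensity δ w.im) ≤
      (∫⁻ x in Icc (-R) R, f x) * ENNReal.ofReal R := by
  calc ∫⁻ w in upperHalfDisk R, f w.re * ENNReal.ofReal (boundaryDensity δ w.im)
      ≤ ∫⁻ w in Icc (-R) R ×ℂ Ioc 0 R, f w.re * ENNReal.ofReal (boundaryDensity δ w.im) :=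
        lintegral_mono_set (upperHalfDisk_subset_reProdIm R)
    _ = (∫⁻ x in Icc (-R) R, f x) * ∫⁻ y in Ioc 0 R, ENNReal.ofReal (boundaryDensity δ y) :=
        Complex.setLIntegral_reProdIm_mul hf
          (measurable_boundaryDensity δ).ennreal_ofReal.aemeasurable
    _ ≤ (∫⁻ x in Icc (-R) R, f x) * ENNReal.ofReal R := by
        gcongr
        exact setLIntegral_boundaryDensity_le hδ hδ1 hR

theorem setLIntegral_exp_mul_freeGFFKernel_le {β R δ : ℝ} (hβ : 0 ≤ β) (hR : 1 ≤ R)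
    (hδ : 0 < δ) (hδ1 : δ ≤ 1) {z : ℂ} (hz : ‖z‖ ≤ R) :
    ∫⁻ w in upperHalfDisk R,
        ENNReal.ofReal (Real.exp (β * freeGFFKernel z w) * boundaryDensity δ w.im) ≤
      ENNReal.ofReal (R ^ (4 * β)) *
        ((∫⁻ s in Icc (-(2 * R)) (2 * R), ENNReal.ofReal (|s| ^ (-(2 * β)))) *
          ENNReal.ofReal R) := by
  set f : ℝ → ℝ≥0∞ := fun x ↦ ENNReal.ofReal (|z.re - x| ^ (-(2 * β)))
  have hf : Measurable f := by fun_prop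
  have h_pointwise : ∀ᵐ w ∂volume.restrict (upperHalfDisk R),
      ENNReal.ofReal (Real.exp (β * freeGFFKernel z w) * boundaryDensity δ w.im) ≤
        ENNReal.ofReal (R ^ (4 * β)) * (f w.re * ENNReal.ofReal (boundaryDensity δ w.im)) := by
    filter_upwards [ae_restrict_mem (measurableSet_upperHalfDisk R),
      ae_restrict_of_ae (Complex.ae_re_ne z.re)] with w hw hzw
    rw [← ENNReal.ofReal_mul (by positivity), ← ENNReal.ofReal_mul (by positivity), ← mul_assoc]
    gcongr
    · exact boundaryDensity_nonneg hδ.le hw.2.le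
    · exact exp_mul_freeGFFKernel_le hβ hR hz (norm_le_of_mem_upperHalfDisk hw) (Ne.symm hzw)
  calc _ ≤ ∫⁻ w in upperHalfDisk R,
          ENNReal.ofReal (R ^ (4 * β)) * (f w.re * ENNReal.ofReal (boundaryDensity δ w.im)) :=
        lintegral_mono_ae h_pointwise
    _ = ENNReal.ofReal (R ^ (4 * β)) *
          ∫⁻ w in upperHalfDisk R, f w.re * ENNReal.ofReal (boundaryDensity δ w.im) :=
        lintegral_const_mul' _ _ ENNReal.ofReal_ne_top
    _ ≤ ENNReal.ofReal (R ^ (4 * β)) * ((∫⁻ x in Icc (-R) R, f x) * ENNReal.ofReal R) := by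
        gcongr
        exact setLIntegral_upperHalfDisk_mul_boundaryDensity_le hδ hδ1 (by linarith)
          hf.aemeasurable
    _ ≤ _ := by
        gcongr _ * (?_ * _)
        exact setLIntegral_Icc_comp_sub_le (fun s ↦ ENNReal.ofReal (|s| ^ (-(2 * β))))
          ((Complex.abs_re_le_norm z).trans hz)

theorem lintegral_boundaryEnergy_upperHalfDisk_le {β R δ : ℝ} (hβ : 0 ≤ β) (hR : 1 ≤ R)
    (hδ : 0 < δ) (hδ1 : δ ≤ 1) :
    ∫⁻ z in upperHalfDisk R, ∫⁻ w in upperHalfDisk R, ENNReal.ofReal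
        (Real.exp (β * freeGFFKernel z w) * boundaryDensity δ z.im * boundaryDensity δ w.im) ≤
      ENNReal.ofReal (2 * R) * ENNReal.ofReal R * (ENNReal.ofReal (R ^ (4 * β)) *
        ((∫⁻ s in Icc (-(2 * R)) (2 * R), ENNReal.ofReal (|s| ^ (-(2 * β)))) *
          ENNReal.ofReal R)) := by
  set M := ENNReal.ofReal (R ^ (4 * β)) *
    ((∫⁻ s in Icc (-(2 * R)) (2 * R), ENNReal.ofReal (|s| ^ (-(2 * β)))) * ENNReal.ofReal R)
  calc _ ≤ ∫⁻ z in upperHalfDisk R,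
          (fun _ ↦ 1) z.re * ENNReal.ofReal (boundaryDensity δ z.im) * M := by
        refine setLIntegral_mono' (measurableSet_upperHalfDisk R) fun z hz ↦ ?_
        have hρ := boundaryDensity_nonneg hδ.le hz.2.le
        simp_rw [mul_comm (Real.exp _), mul_assoc, ENNReal.ofReal_mul hρ, one_mul]
        rw [lintegral_const_mul' _ _ ENNReal.ofReal_ne_top]
        gcongr
        exact setLIntegral_exp_mul_freeGFFKernel_le hβ hR hδ hδ1 (norm_le_of_mem_upperHalfDisk hz)
    _ = (∫⁻ z in upperHalfDisk R,
          (fun _ ↦ 1) z.re * ENNReal.ofReal (boundaryDensity δ z.im)) * M :=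
        lintegral_mul_const _ (measurable_const.mul
          ((measurable_boundaryDensity δ).ennreal_ofReal.comp Complex.measurable_im))
    _ ≤ (∫⁻ _ in Icc (-R) R, 1) * ENNReal.ofReal R * M := by
        gcongr
        exact setLIntegral_upperHalfDisk_mul_boundaryDensity_le hδ hδ1 (by linarith)
          aemeasurable_const
    _ = _ := by rw [setLIntegral_one, Real.volume_Icc, sub_neg_eq_add, ← two_mul]

theorem energy_condition_boundary_lebesgue_general (βt : ℝ) (hβ : βt ∈ Set.Ioo (0 : ℝ) (1 / 2))
    (K : Set ℂ) (hK : IsCompact K) :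
    (⨆ δ ∈ Set.Ioo (0 : ℝ) 1,
      ∫⁻ z in K ∩ {z : ℂ | 0 < z.im}, ∫⁻ w in K ∩ {w : ℂ | 0 < w.im},
        ENNReal.ofReal (Real.exp (βt * freeGFFKernel z w)
          * (δ * (2 * z.im) ^ (δ - 1)) * (δ * (2 * w.im) ^ (δ - 1)))) < ⊤ := by
  obtain ⟨hβ0, hβ2⟩ := hβ
  obtain ⟨R, hR, hKR⟩ : ∃ R, 1 ≤ R ∧ K ⊆ Metric.closedBall 0 R := by
    obtain ⟨R₀, hR₀⟩ := hK.isBounded.subset_closedBall 0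
    exact ⟨max R₀ 1, le_max_right _ _,
      hR₀.trans (Metric.closedBall_subset_closedBall (le_max_left _ _))⟩
  have hKB : K ∩ {z : ℂ | 0 < z.im} ⊆ upperHalfDisk R := inter_subset_inter_left _ hKR
  set C := ∫⁻ s in Icc (-(2 * R)) (2 * R), ENNReal.ofReal (|s| ^ (-(2 * βt)))
  have hC : C < ⊤ := setLIntegral_Icc_abs_rpow_lt_top (by linarith) (2 * R)
  have hbound : ENNReal.ofReal (2 * R) * ENNReal.ofReal R *
      (ENNReal.ofReal (R ^ (4 * βt)) * (C * ENNReal.ofReal R)) < ⊤ := by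
    finiteness
  refine lt_of_le_of_lt (iSup₂_le fun δ hδ ↦ ?_) hbound
  calc _ ≤ ∫⁻ z in upperHalfDisk R, ∫⁻ w in upperHalfDisk R, ENNReal.ofReal
          (Real.exp (βt * freeGFFKernel z w) * boundaryDensity δ z.im * boundaryDensity δ w.im) :=
        (lintegral_mono fun z ↦ lintegral_mono_set hKB).trans (lintegral_mono_set hKB)
    _ ≤ _ := lintegral_boundaryEnergy_upperHalfDisk_le hβ0.le hR hδ.1 hδ.2.le

/-- For every `β̃ ∈ (0, 1/2)` and every compact `K` contained in the closed
upper half-plane, the energies of the approximate boundary Lebesgue measures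
`L^δ_ℝ(dz) = δ·(2·Im z)^{δ−1} dz` against the kernel `e^{β̃·G}` are bounded uniformly
over `δ ∈ (0,1)`. -/
theorem energy_condition_boundary_lebesgue (βt : ℝ) (hβ : βt ∈ Set.Ioo (0 : ℝ) (1 / 2))
    (K : Set ℂ) (hK : IsCompact K) (hK' : K ⊆ {z : ℂ | 0 ≤ z.im}) :
    (⨆ δ ∈ Set.Ioo (0 : ℝ) 1,
      ∫⁻ z in K ∩ {z : ℂ | 0 < z.im}, ∫⁻ w in K ∩ {w : ℂ | 0 < w.im},
        ENNReal.ofReal (Real.exp (βt * freeGFFKernel z w)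
          * (δ * (2 * z.im) ^ (δ - 1)) * (δ * (2 * w.im) ^ (δ - 1)))) < ⊤ :=
  energy_condition_boundary_lebesgue_general βt hβ K hK
end

section
/- Let (Ω, ℱ, P) be a probability space, 𝒴 a complete separable metric space with its Borel σ-algebra, and let X_n, X : Ω → ℝ and Y_n, Y : Ω → 𝒴 be measurable, with X_n and X integrable. Let Z : Ω → ℝ be measurable. Assume: (i) E|X_n − X| → 0; (ii) Y_n → Y in probability; (iii) E[X_n | σ(Y_n)] → Z in probability. Then E[X_n | σ(Y_n)] → Z in L¹ (in particular Z is integrable), and E[Z | σ(Y)] = E[X | σ(Y)] almost surely. In particular, if Z is σ(Y)-measurable then Z = E[X | σ(Y)] almost surely. -/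
/-!
Conditional expectation is an `L¹` contraction, so `E[Xₙ | σ(Yₙ)]` differs from the uniformly
integrable family `E[X | σ(Yₙ)]` by a sequence tending to `0` in `L¹`; hence it is uniformly
integrable, and Vitali's theorem upgrades its convergence in measure to `Z` into `L¹` convergence.
For bounded continuous `f`, `∫ f(Yₙ) E[Xₙ | σ(Yₙ)] = ∫ f(Yₙ) Xₙ`, and both sides converge
(dominated convergence along a.e. convergent subsequences of `Yₙ`), giving
`∫ f(Y) Z = ∫ f(Y) X`. Since bounded continuous functions determine finite Borel measures, the
images under `Y` of `(Z - X)⁺ P` and `(Z - X)⁻ P` agree, i.e. `Z` and `X` have the same integral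
over every `σ(Y)`-measurable set.
-/

open MeasureTheory Filter Topology BoundedContinuousFunction

section

variable {Ω 𝒴 : Type*} {m0 : MeasurableSpace Ω} {μ : Measure Ω}

theorem tendsto_integral_abs_sub_iff_tendsto_eLpNorm {ι : Type*} {l : Filter ι}
    {f : ι → Ω → ℝ} {g : Ω → ℝ} (hf : ∀ i, Integrable (f i) μ) (hg : Integrable g μ) :
    Tendsto (fun i => ∫ ω, |f i ω - g ω| ∂μ) l (𝓝 0) ↔
      Tendsto (fun i => eLpNorm (f i - g) 1 μ) l (𝓝 0) := by
  have h : ∀ i, ∫ ω, |f i ω - g ω| ∂μ = (eLpNorm (f i - g) 1 μ).toReal := fun i => by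
    rw [toReal_eLpNorm ((hf i).sub hg).1, lpNorm_one_eq_integral_norm ((hf i).sub hg).1]
    rfl
  simp_rw [h]
  rw [← ENNReal.toReal_zero, ENNReal.tendsto_toReal_iff
    (fun i => (memLp_one_iff_integrable.2 ((hf i).sub hg)).eLpNorm_ne_top) ENNReal.zero_ne_top]

theorem unifIntegrable_condExp_of_tendsto_eLpNorm [IsFiniteMeasure μ]
    {m : ℕ → MeasurableSpace Ω} (hm : ∀ n, m n ≤ m0) {f : ℕ → Ω → ℝ} {g : Ω → ℝ}
    (hf : ∀ n, Integrable (f n) μ) (hg : Integrable g μ)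
    (hfg : Tendsto (fun n => eLpNorm (f n - g) 1 μ) atTop (𝓝 0)) :
    UnifIntegrable (fun n => μ[f n | m n]) 1 μ := by
  have hsmall : Tendsto (fun n => eLpNorm (μ[f n - g | m n]) 1 μ) atTop (𝓝 0) :=
    tendsto_of_tendsto_of_tendsto_of_le_of_le tendsto_const_nhds hfg (fun _ => zero_le)
      fun n => eLpNorm_condExp_le_eLpNorm _ le_rfl
  have hsum := (hg.uniformIntegrable_condExp hm).unifIntegrable.add
    (unifIntegrable_of_tendsto_Lp_zero le_rfl ENNReal.one_ne_top
      (fun n => memLp_one_iff_integrable.2 integrable_condExp) hsmall) le_rfl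
    (fun n => integrable_condExp.1) (fun n => integrable_condExp.1)
  refine hsum.ae_eq fun n => ?_
  filter_upwards [condExp_sub (m := m n) (hf n) hg] with ω hω
  simp [hω]

theorem integrable_of_tendstoInMeasure_condExp {m : ℕ → MeasurableSpace Ω}
    {f : ℕ → Ω → ℝ} {g h : Ω → ℝ} (hf : ∀ n, Integrable (f n) μ) (hg : Integrable g μ)
    (hfg : Tendsto (fun n => eLpNorm (f n - g) 1 μ) atTop (𝓝 0))
    (hfh : TendstoInMeasure μ (fun n => μ[f n | m n]) atTop h) :
    Integrable h μ := by
  have hbound : ∀ᶠ n in atTop, eLpNorm (μ[f n | m n]) 1 μ ≤ 1 + eLpNorm g 1 μ := by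
    filter_upwards [hfg.eventually (eventually_le_nhds zero_lt_one)] with n hn
    calc eLpNorm (μ[f n | m n]) 1 μ ≤ eLpNorm (f n) 1 μ :=
        eLpNorm_condExp_le_eLpNorm _ le_rfl
      _ = eLpNorm (f n - g + g) 1 μ := by rw [sub_add_cancel]
      _ ≤ eLpNorm (f n - g) 1 μ + eLpNorm g 1 μ :=
        eLpNorm_add_le ((hf n).sub hg).1 hg.1 le_rfl
      _ ≤ 1 + eLpNorm g 1 μ := by gcongr
  refine memLp_one_iff_integrable.1
    ⟨hfh.aestronglyMeasurable fun n => integrable_condExp.1, ?_⟩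
  exact (eLpNorm_le_of_tendstoInMeasure hbound hfh fun n => integrable_condExp.1).trans_lt
    (ENNReal.add_lt_top.2 ⟨ENNReal.one_lt_top, (memLp_one_iff_integrable.2 hg).eLpNorm_lt_top⟩)

theorem integral_mul_condExp {m : MeasurableSpace Ω} (hm : m ≤ m0) [SigmaFinite (μ.trim hm)]
    {φ f : Ω → ℝ} (hφ : StronglyMeasurable[m] φ) (hφf : Integrable (φ * f) μ)
    (hf : Integrable f μ) :
    ∫ ω, φ ω * μ[f | m] ω ∂μ = ∫ ω, φ ω * f ω ∂μ :=
  (integral_congr_ae (condExp_mul_of_stronglyMeasurable_left hφ hφf hf)).symm.trans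
    (integral_condExp hm)

theorem BoundedContinuousFunction.integrable_comp_mul [TopologicalSpace 𝒴] [MeasurableSpace 𝒴]
    [OpensMeasurableSpace 𝒴] (f : 𝒴 →ᵇ ℝ) {Y : Ω → 𝒴} (hY : AEMeasurable Y μ) {W : Ω → ℝ}
    (hW : Integrable W μ) : Integrable (fun ω => f (Y ω) * W ω) μ :=
  hW.bdd_mul (f.continuous.measurable.comp_aemeasurable hY).aestronglyMeasurable
    (Eventually.of_forall fun _ => f.norm_coe_le_norm _)

theorem tendsto_integral_comp_mul_of_tendstoInMeasure [PseudoEMetricSpace 𝒴] [MeasurableSpace 𝒴]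
    [OpensMeasurableSpace 𝒴] {Yn : ℕ → Ω → 𝒴} {Y : Ω → 𝒴} (hYn : ∀ n, AEMeasurable (Yn n) μ)
    (hY : TendstoInMeasure μ Yn atTop Y) {W : Ω → ℝ} (hW : Integrable W μ) (f : 𝒴 →ᵇ ℝ) :
    Tendsto (fun n => ∫ ω, f (Yn n ω) * W ω ∂μ) atTop (𝓝 (∫ ω, f (Y ω) * W ω ∂μ)) := by
  refine tendsto_of_subseq_tendsto fun ns hns => ?_
  obtain ⟨ms, -, hms⟩ := (hY.comp hns).exists_seq_tendsto_ae
  refine ⟨ms, tendsto_integral_of_dominated_convergence (fun ω => ‖f‖ * ‖W ω‖)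
    (fun k => (f.integrable_comp_mul (hYn _) hW).1) (hW.norm.const_mul _)
    (fun k => Eventually.of_forall fun ω => ?_) ?_⟩
  · rw [norm_mul]
    gcongr
    exact f.norm_coe_le_norm _
  · filter_upwards [hms] with ω hω
    exact ((f.continuous.tendsto _).comp hω).mul_const _

theorem tendsto_integral_comp_mul [PseudoEMetricSpace 𝒴] [MeasurableSpace 𝒴]
    [OpensMeasurableSpace 𝒴] {Yn : ℕ → Ω → 𝒴} {Y : Ω → 𝒴} (hYn : ∀ n, AEMeasurable (Yn n) μ)
    (hY : TendstoInMeasure μ Yn atTop Y) {Wn : ℕ → Ω → ℝ} {W : Ω → ℝ}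
    (hWn : ∀ n, Integrable (Wn n) μ) (hW : Integrable W μ)
    (hWnW : Tendsto (fun n => ∫ ω, |Wn n ω - W ω| ∂μ) atTop (𝓝 0)) (f : 𝒴 →ᵇ ℝ) :
    Tendsto (fun n => ∫ ω, f (Yn n ω) * Wn n ω ∂μ) atTop (𝓝 (∫ ω, f (Y ω) * W ω ∂μ)) := by
  have hsmall : Tendsto (fun n => ∫ ω, f (Yn n ω) * (Wn n ω - W ω) ∂μ) atTop (𝓝 0) := by
    refine squeeze_zero_norm (fun n => norm_integral_le_of_norm_le
      (g := fun ω => ‖f‖ * |Wn n ω - W ω|) (((hWn n).sub hW).abs.const_mul ‖f‖)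
      (Eventually.of_forall fun ω => ?_))
      (by simpa only [integral_const_mul, mul_zero] using hWnW.const_mul ‖f‖)
    rw [norm_mul, Real.norm_eq_abs (Wn n ω - W ω)]
    exact mul_le_mul_of_nonneg_right (f.norm_coe_le_norm _) (abs_nonneg _)
  have hsplit : ∀ n, ∫ ω, f (Yn n ω) * Wn n ω ∂μ
      = ∫ ω, f (Yn n ω) * (Wn n ω - W ω) ∂μ + ∫ ω, f (Yn n ω) * W ω ∂μ := fun n => by
    have hint : Integrable (fun ω => f (Yn n ω) * (Wn n ω - W ω)) μ :=
      f.integrable_comp_mul (hYn n) ((hWn n).sub hW)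
    rw [← integral_add hint (f.integrable_comp_mul (hYn n) hW)]
    simp [mul_sub]
  simpa [hsplit] using hsmall.add (tendsto_integral_comp_mul_of_tendstoInMeasure hYn hY hW f)

theorem setIntegral_preimage_eq_zero_of_forall_integral_comp_mul_eq_zero [TopologicalSpace 𝒴]
    [MeasurableSpace 𝒴] [HasOuterApproxClosed 𝒴] [BorelSpace 𝒴] {Y : Ω → 𝒴} (hY : Measurable Y)
    {W : Ω → ℝ} (hW : Integrable W μ) (h : ∀ f : 𝒴 →ᵇ ℝ, ∫ ω, f (Y ω) * W ω ∂μ = 0)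
    {B : Set 𝒴} (hB : MeasurableSet B) :
    ∫ ω in Y ⁻¹' B, W ω ∂μ = 0 := by
  let ν : (Ω → ℝ) → Measure 𝒴 := fun V => (μ.withDensity fun ω => ENNReal.ofReal (V ω)).map Y
  have hν_integral : ∀ V, Integrable V μ → ∀ f : 𝒴 →ᵇ ℝ,
      ∫ y, f y ∂ν V = ∫ ω, f (Y ω) * max (V ω) 0 ∂μ := fun V hV f => by
    rw [integral_map hY.aemeasurable f.continuous.measurable.aestronglyMeasurable,
      integral_withDensity_eq_integral_toReal_smul₀ hV.1.aemeasurable.ennreal_ofReal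
        (Eventually.of_forall fun _ => ENNReal.ofReal_lt_top)]
    simp_rw [ENNReal.toReal_ofReal', smul_eq_mul, mul_comm]
  have := isFiniteMeasure_withDensity_ofReal hW.2
  have := isFiniteMeasure_withDensity_ofReal hW.neg.2
  have hν : ν W = ν (-W) := ext_of_forall_integral_eq_of_IsFiniteMeasure fun f => by
    rw [hν_integral W hW, hν_integral _ hW.neg, ← sub_eq_zero, ← integral_sub
      (f.integrable_comp_mul hY.aemeasurable hW.pos_part)
      (f.integrable_comp_mul hY.aemeasurable hW.neg.pos_part)]
    simpa [← mul_sub, max_zero_sub_max_neg_zero_eq_self] using h f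
  have hνB : ν W B = ν (-W) B := by rw [hν]
  simp only [ν, Measure.map_apply hY hB, withDensity_apply _ (hY hB), Pi.neg_apply] at hνB
  rw [integral_eq_lintegral_pos_part_sub_lintegral_neg_part hW.restrict, hνB, sub_self]

theorem condExp_comap_ae_eq_of_forall_integral_comp_mul_eq [IsFiniteMeasure μ]
    [TopologicalSpace 𝒴] [MeasurableSpace 𝒴] [HasOuterApproxClosed 𝒴] [BorelSpace 𝒴]
    {Y : Ω → 𝒴} (hY : Measurable Y) {f g : Ω → ℝ} (hf : Integrable f μ) (hg : Integrable g μ)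
    (h : ∀ φ : 𝒴 →ᵇ ℝ, ∫ ω, φ (Y ω) * f ω ∂μ = ∫ ω, φ (Y ω) * g ω ∂μ) :
    μ[f | MeasurableSpace.comap Y inferInstance]
      =ᵐ[μ] μ[g | MeasurableSpace.comap Y inferInstance] := by
  refine ae_eq_condExp_of_forall_setIntegral_eq hY.comap_le hg
    (fun _ _ _ => integrable_condExp.integrableOn) (fun s hs _ => ?_)
    stronglyMeasurable_condExp.aestronglyMeasurable
  obtain ⟨B, hB, rfl⟩ := hs
  rw [setIntegral_condExp hY.comap_le hf ⟨B, hB, rfl⟩, ← sub_eq_zero,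
    ← integral_sub hf.integrableOn hg.integrableOn]
  refine setIntegral_preimage_eq_zero_of_forall_integral_comp_mul_eq_zero hY (hf.sub hg)
    (fun φ => ?_) hB
  rw [← sub_eq_zero.2 (h φ), ← integral_sub (φ.integrable_comp_mul hY.aemeasurable hf)
    (φ.integrable_comp_mul hY.aemeasurable hg)]
  simp [mul_sub]

end

theorem convergence_conditional_expectation_general
    {Ω : Type*} [MeasurableSpace Ω] (P : Measure Ω) [IsProbabilityMeasure P]
    {𝒴 : Type*} [MetricSpace 𝒴] [MeasurableSpace 𝒴] [BorelSpace 𝒴]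
    (Xn : ℕ → Ω → ℝ) (X : Ω → ℝ) (Yn : ℕ → Ω → 𝒴) (Y : Ω → 𝒴) (Z : Ω → ℝ)
    (hXn : ∀ n, Integrable (Xn n) P) (hX : Integrable X P)
    (hYn : ∀ n, Measurable (Yn n)) (hY : Measurable Y)
    (h1 : Tendsto (fun n => ∫ ω, |Xn n ω - X ω| ∂P) atTop (𝓝 0))
    (h2 : TendstoInMeasure P Yn atTop Y)
    (h3 : TendstoInMeasure P
      (fun n => P[Xn n | MeasurableSpace.comap (Yn n) inferInstance]) atTop Z) :
    Tendsto (fun n => ∫ ω, |(P[Xn n | MeasurableSpace.comap (Yn n) inferInstance]) ω - Z ω| ∂P)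
        atTop (𝓝 0)
      ∧ Integrable Z P
      ∧ P[Z | MeasurableSpace.comap Y inferInstance]
          =ᵐ[P] P[X | MeasurableSpace.comap Y inferInstance]
      ∧ (Measurable[MeasurableSpace.comap Y inferInstance] Z →
          Z =ᵐ[P] P[X | MeasurableSpace.comap Y inferInstance]) := by
  have hXn_L1 := (tendsto_integral_abs_sub_iff_tendsto_eLpNorm hXn hX).1 h1
  have hZ : Integrable Z P := integrable_of_tendstoInMeasure_condExp hXn hX hXn_L1 h3
  have hCE_L1 : Tendsto (fun n => ∫ ω, |(P[Xn n | MeasurableSpace.comap (Yn n) inferInstance]) ω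
      - Z ω| ∂P) atTop (𝓝 0) :=
    (tendsto_integral_abs_sub_iff_tendsto_eLpNorm (fun n => integrable_condExp) hZ).2 <|
      tendsto_Lp_finite_of_tendstoInMeasure le_rfl ENNReal.one_ne_top
        (fun n => integrable_condExp.1) (memLp_one_iff_integrable.2 hZ)
        (unifIntegrable_condExp_of_tendsto_eLpNorm (fun n => (hYn n).comap_le) hXn hX hXn_L1) h3
  have hYn' : ∀ n, AEMeasurable (Yn n) P := fun n => (hYn n).aemeasurable
  have hZX : ∀ f : 𝒴 →ᵇ ℝ, ∫ ω, f (Y ω) * Z ω ∂P = ∫ ω, f (Y ω) * X ω ∂P := fun f => by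
    refine tendsto_nhds_unique ?_ (tendsto_integral_comp_mul hYn' h2 hXn hX h1 f)
    refine (tendsto_integral_comp_mul hYn' h2 (fun n => integrable_condExp) hZ hCE_L1 f).congr
      fun n => integral_mul_condExp (hYn n).comap_le ?_
        (f.integrable_comp_mul (hYn' n) (hXn n)) (hXn n)
    exact (f.continuous.measurable.comp (comap_measurable (Yn n))).stronglyMeasurable
  have hcondExp := condExp_comap_ae_eq_of_forall_integral_comp_mul_eq hY hZ hX hZX
  refine ⟨hCE_L1, hZ, hcondExp, fun hZY => ?_⟩
  rwa [condExp_of_stronglyMeasurable hY.comap_le hZY.stronglyMeasurable hZ] at hcondExp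

/-- Lemma B.1: convergence of conditional expectations. If `Xₙ → X` in `L¹`,
`Yₙ → Y` in probability (in a Polish space), and `E[Xₙ | σ(Yₙ)] → Z` in probability, then
`E[Xₙ | σ(Yₙ)] → Z` in `L¹` (in particular `Z` is integrable), `E[Z | σ(Y)] = E[X | σ(Y)]`
a.s., and in particular if `Z` is `σ(Y)`-measurable, then `Z = E[X | σ(Y)]` a.s. -/
theorem convergence_conditional_expectation
    {Ω : Type*} [MeasurableSpace Ω] (P : Measure Ω) [IsProbabilityMeasure P]
    {𝒴 : Type*} [MetricSpace 𝒴] [PolishSpace 𝒴] [MeasurableSpace 𝒴] [BorelSpace 𝒴]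
    (Xn : ℕ → Ω → ℝ) (X : Ω → ℝ) (Yn : ℕ → Ω → 𝒴) (Y : Ω → 𝒴) (Z : Ω → ℝ)
    (hXnm : ∀ n, Measurable (Xn n)) (hXm : Measurable X)
    (hXn : ∀ n, Integrable (Xn n) P) (hX : Integrable X P)
    (hYn : ∀ n, Measurable (Yn n)) (hY : Measurable Y) (hZ : Measurable Z)
    (h1 : Tendsto (fun n => ∫ ω, |Xn n ω - X ω| ∂P) atTop (𝓝 0))
    (h2 : TendstoInMeasure P Yn atTop Y)
    (h3 : TendstoInMeasure P
      (fun n => P[Xn n | MeasurableSpace.comap (Yn n) inferInstance]) atTop Z) :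
    Tendsto (fun n => ∫ ω, |(P[Xn n | MeasurableSpace.comap (Yn n) inferInstance]) ω - Z ω| ∂P)
        atTop (𝓝 0)
      ∧ Integrable Z P
      ∧ P[Z | MeasurableSpace.comap Y inferInstance]
          =ᵐ[P] P[X | MeasurableSpace.comap Y inferInstance]
      ∧ (Measurable[MeasurableSpace.comap Y inferInstance] Z →
          Z =ᵐ[P] P[X | MeasurableSpace.comap Y inferInstance]) :=
  convergence_conditional_expectation_general P Xn X Yn Y Z hXn hX hYn hY h1 h2 h3
end

section
/- Let (Ω, ℱ, P) be a probability space and 𝒳, 𝒴, 𝒵 complete separable metric spaces with their Borel σ-algebras. Let (X_n, Y_n, Z_n) and (X, Y, Z) be random variables with values in 𝒳 × 𝒴 × 𝒵 such that, for every n, Y_n and Z_n are conditionally independent given σ(X_n). Assume X_n → X, Y_n → Y and Z_n → Z in probability, and assume that for every bounded continuous f : 𝒴 → ℝ there exists a σ(X)-measurable real random variable w such that E[f(Y_n) | σ(X_n)] → w in probability. Then Y and Z are conditionally independent given σ(X). -/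
/-!
For each `n`, conditional independence of `Yₙ` and `Zₙ` given `σ(Xₙ)` yields
`E[f(Yₙ) g(Zₙ) h(Xₙ)] = E[Vₙ g(Zₙ) h(Xₙ)]` with `Vₙ = E[f(Yₙ) | σ(Xₙ)]`, for all bounded continuous
`f, g, h`. Both integrands are uniformly bounded and converge in probability, so in the limit
`E[f(Y) g(Z) h(X)] = E[w g(Z) h(X)]`. Bounded continuous functions of `X` determine conditional
expectations given `σ(X)`, since they approximate indicators of closed sets, which generate the
Borel sets. Hence `E[f(Y) g(Z) | σ(X)] = E[w g(Z) | σ(X)] = w E[g(Z) | σ(X)]`, and `g = 1`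
identifies `w` with `E[f(Y) | σ(X)]`.
-/

open MeasureTheory Filter Topology

/-- `Y` and `Z` are conditionally independent given the σ-algebra `m`, in the sense that
`E[f(Y)·g(Z) | m] = E[f(Y) | m] · E[g(Z) | m]` a.s. for all bounded continuous `f, g`. -/
def CondIndepVia {Ω : Type*} [MeasurableSpace Ω] (P : Measure Ω)
    {𝒴 𝒵 : Type*} [TopologicalSpace 𝒴] [TopologicalSpace 𝒵]
    (m : MeasurableSpace Ω) (Y : Ω → 𝒴) (Z : Ω → 𝒵) : Prop :=
  ∀ (f : BoundedContinuousFunction 𝒴 ℝ) (g : BoundedContinuousFunction 𝒵 ℝ),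
    P[fun ω => f (Y ω) * g (Z ω) | m]
      =ᵐ[P] fun ω => (P[fun ω' => f (Y ω') | m]) ω * (P[fun ω' => g (Z ω') | m]) ω

open scoped BoundedContinuousFunction

namespace MeasureTheory

variable {α ι E F : Type*} {m : MeasurableSpace α} {μ : Measure α}

theorem TendstoInMeasure.prodMk [PseudoEMetricSpace E] [PseudoEMetricSpace F] {l : Filter ι}
    {f : ι → α → E} {g : ι → α → F} {f' : α → E} {g' : α → F}
    (hf : TendstoInMeasure μ f l f') (hg : TendstoInMeasure μ g l g') :
    TendstoInMeasure μ (fun i ω => (f i ω, g i ω)) l (fun ω => (f' ω, g' ω)) := by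
  intro ε hε
  have hsum := (hf ε hε).add (hg ε hε)
  rw [add_zero] at hsum
  refine tendsto_of_tendsto_of_tendsto_of_le_of_le tendsto_const_nhds hsum (fun _ => zero_le)
    fun i => (measure_mono fun ω hω => ?_).trans (measure_union_le _ _)
  simpa only [Set.mem_ofPred_eq, Prod.edist_eq, le_max_iff, Set.mem_union] using hω

theorem TendstoInMeasure.tendsto_integral_comp [IsFiniteMeasure μ] [PseudoEMetricSpace E]
    [NormedAddCommGroup F] [NormedSpace ℝ F] {u : ℕ → α → E} {v : α → E} {φ : E → F}
    (huv : TendstoInMeasure μ u atTop v) (hφ : Continuous φ)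
    (hm : ∀ n, AEStronglyMeasurable (fun ω => φ (u n ω)) μ) {C : ℝ}
    (hb : ∀ n, ∀ᵐ ω ∂μ, ‖φ (u n ω)‖ ≤ C) :
    Tendsto (fun n => ∫ ω, φ (u n ω) ∂μ) atTop (𝓝 (∫ ω, φ (v ω) ∂μ)) := by
  refine tendsto_of_subseq_tendsto fun ns hns => ?_
  obtain ⟨ms, -, hae⟩ := (huv.comp hns).exists_seq_tendsto_ae
  exact ⟨ms, tendsto_integral_of_dominated_convergence (fun _ => C) (fun k => hm _)
    (integrable_const C) (fun k => hb _) (hae.mono fun ω hω => (hφ.tendsto _).comp hω)⟩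

theorem TendstoInMeasure.ae_norm_le [SeminormedAddCommGroup E] {u : ℕ → α → E} {v : α → E}
    (huv : TendstoInMeasure μ u atTop v) {C : ℝ} (hb : ∀ n, ∀ᵐ ω ∂μ, ‖u n ω‖ ≤ C) :
    ∀ᵐ ω ∂μ, ‖v ω‖ ≤ C := by
  obtain ⟨ns, -, hae⟩ := huv.exists_seq_tendsto_ae
  filter_upwards [hae, ae_all_iff.mpr hb] with ω hω hbω
  exact le_of_tendsto hω.norm (Eventually.of_forall fun k => hbω (ns k))

end MeasureTheory

section TestFunctions

variable {Ω 𝒳 : Type*} {mΩ : MeasurableSpace Ω} {P : Measure Ω}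
  [TopologicalSpace 𝒳] [HasOuterApproxClosed 𝒳] [MeasurableSpace 𝒳] [BorelSpace 𝒳]
  {X : Ω → 𝒳} {u v : Ω → ℝ}

theorem tendsto_integral_mul_apprSeq_comp (hX : Measurable X) (hu : Integrable u P)
    {F : Set 𝒳} (hF : IsClosed F) :
    Tendsto (fun n => ∫ ω, u ω * (hF.apprSeq n (X ω) : ℝ) ∂P) atTop
      (𝓝 (∫ ω in X ⁻¹' F, u ω ∂P)) := by
  rw [← integral_indicator (hX hF.measurableSet)]
  refine tendsto_integral_of_dominated_convergence (fun ω => ‖u ω‖)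
    (fun n => hu.1.mul ((NNReal.continuous_coe.comp (hF.apprSeq n).continuous).measurable.comp
      hX).aestronglyMeasurable) hu.norm (fun n => ae_of_all _ fun ω => ?_)
    (ae_of_all _ fun ω => ?_)
  · rw [norm_mul]
    exact mul_le_of_le_one_right (norm_nonneg _)
      (by simpa using HasOuterApproxClosed.apprSeq_apply_le_one hF n (X ω))
  · have hlim := (tendsto_const_nhds (x := u ω)).mul <| NNReal.tendsto_coe.mpr
      (tendsto_pi_nhds.mp (HasOuterApproxClosed.tendsto_apprSeq hF) (X ω))
    by_cases hω : X ω ∈ F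
    · simpa [Set.indicator_of_mem (show ω ∈ X ⁻¹' F from hω), hω] using hlim
    · simpa [Set.indicator_of_notMem (show ω ∉ X ⁻¹' F from hω), hω] using hlim

theorem setIntegral_preimage_eq_of_forall_integral_mul_eq (hX : Measurable X)
    (hu : Integrable u P) (hv : Integrable v P)
    (h : ∀ φ : 𝒳 →ᵇ ℝ, ∫ ω, u ω * φ (X ω) ∂P = ∫ ω, v ω * φ (X ω) ∂P)
    {B : Set 𝒳} (hB : MeasurableSet B) :
    ∫ ω in X ⁻¹' B, u ω ∂P = ∫ ω in X ⁻¹' B, v ω ∂P := by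
  have hclosed (F : Set 𝒳) (hF : IsClosed F) :
      ∫ ω in X ⁻¹' F, u ω ∂P = ∫ ω in X ⁻¹' F, v ω ∂P :=
    tendsto_nhds_unique (tendsto_integral_mul_apprSeq_comp hX hu hF)
      ((tendsto_integral_mul_apprSeq_comp hX hv hF).congr fun n =>
        (h ((hF.apprSeq n).comp _ NNReal.isometry_coe.lipschitz)).symm)
  have hmap_apply {w : Ω → ℝ} (hw : Integrable w P) {B : Set 𝒳} (hB : MeasurableSet B) :
      (P.withDensityᵥ w).map X B = ∫ ω in X ⁻¹' B, w ω ∂P := by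
    rw [VectorMeasure.map_apply _ hX hB, withDensityᵥ_apply hw (hX hB)]
  suffices (P.withDensityᵥ u).map X = (P.withDensityᵥ v).map X by
    simpa only [hmap_apply hu hB, hmap_apply hv hB] using congrArg (· B) this
  refine VectorMeasure.ext_of_generateFrom {F | IsClosed F} (fun F hF => ?_)
    (by rw [BorelSpace.measurable_eq (α := 𝒳), borel_eq_generateFrom_isClosed])
    isPiSystem_isClosed ?_
  · simpa only [hmap_apply hu hF.measurableSet, hmap_apply hv hF.measurableSet] using
      hclosed F hF
  · simpa only [hmap_apply hu .univ, hmap_apply hv .univ] using hclosed _ isClosed_univ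

theorem condExp_comap_eq_of_forall_integral_mul_eq [IsFiniteMeasure P] (hX : Measurable X)
    (hu : Integrable u P) (hv : Integrable v P)
    (h : ∀ φ : 𝒳 →ᵇ ℝ, ∫ ω, u ω * φ (X ω) ∂P = ∫ ω, v ω * φ (X ω) ∂P) :
    P[u | MeasurableSpace.comap X inferInstance]
      =ᵐ[P] P[v | MeasurableSpace.comap X inferInstance] := by
  refine ae_eq_condExp_of_forall_setIntegral_eq hX.comap_le hv
    (fun _ _ _ => integrable_condExp.integrableOn) (fun s hs _ => ?_)
    stronglyMeasurable_condExp.aestronglyMeasurable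
  obtain ⟨B, hB, rfl⟩ := hs
  rw [setIntegral_condExp hX.comap_le hu ⟨B, hB, rfl⟩]
  exact setIntegral_preimage_eq_of_forall_integral_mul_eq hX hu hv h hB

end TestFunctions

section CondIndep

variable {Ω : Type*} {mΩ : MeasurableSpace Ω} {P : Measure Ω} [IsFiniteMeasure P]

theorem BoundedContinuousFunction.integrable_comp {𝒴 : Type*} [TopologicalSpace 𝒴]
    [MeasurableSpace 𝒴] [OpensMeasurableSpace 𝒴] (f : 𝒴 →ᵇ ℝ) {Y : Ω → 𝒴} (hY : Measurable Y) :
    Integrable (fun ω => f (Y ω)) P :=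
  .of_bound (f.continuous.measurable.comp hY).aestronglyMeasurable ‖f‖
    (ae_of_all _ fun _ => f.norm_coe_le_norm _)

theorem integral_mul_condExp_of_bound {m : MeasurableSpace Ω} (hm : m ≤ mΩ) {H G : Ω → ℝ}
    (hH : StronglyMeasurable[m] H) (hG : Integrable G P) {c : ℝ}
    (hHc : ∀ᵐ ω ∂P, ‖H ω‖ ≤ c) :
    ∫ ω, H ω * P[G | m] ω ∂P = ∫ ω, H ω * G ω ∂P :=
  calc ∫ ω, H ω * P[G | m] ω ∂P = ∫ ω, P[H * G | m] ω ∂P :=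
        integral_congr_ae (condExp_stronglyMeasurable_mul_of_bound hm hH hG c hHc).symm
    _ = ∫ ω, H ω * G ω ∂P := integral_condExp hm

theorem CondIndepVia.integral_mul_eq_integral_condExp_mul {𝒳 𝒴 𝒵 : Type*}
    [TopologicalSpace 𝒳] [MeasurableSpace 𝒳] [OpensMeasurableSpace 𝒳]
    [TopologicalSpace 𝒴] [MeasurableSpace 𝒴] [OpensMeasurableSpace 𝒴]
    [TopologicalSpace 𝒵] [MeasurableSpace 𝒵] [OpensMeasurableSpace 𝒵]
    {X : Ω → 𝒳} {Y : Ω → 𝒴} {Z : Ω → 𝒵} (hX : Measurable X) (hY : Measurable Y)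
    (hZ : Measurable Z) (hci : CondIndepVia P (MeasurableSpace.comap X inferInstance) Y Z)
    (f : 𝒴 →ᵇ ℝ) (g : 𝒵 →ᵇ ℝ) (h : 𝒳 →ᵇ ℝ) :
    ∫ ω, f (Y ω) * g (Z ω) * h (X ω) ∂P =
      ∫ ω, P[fun ω' => f (Y ω') | MeasurableSpace.comap X inferInstance] ω * g (Z ω) * h (X ω)
        ∂P := by
  set m := MeasurableSpace.comap X inferInstance
  set V := P[fun ω' => f (Y ω') | m]
  have hm : m ≤ mΩ := hX.comap_le
  have hH : StronglyMeasurable[m] fun ω => h (X ω) :=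
    (h.continuous.measurable.comp (comap_measurable X)).stronglyMeasurable
  have hHb : ∀ ω, ‖h (X ω)‖ ≤ ‖h‖ := fun ω => h.norm_coe_le_norm _
  have hVb : ∀ᵐ ω ∂P, ‖V ω‖ ≤ ‖f‖ :=
    ae_bdd_norm_condExp_of_ae_bdd_norm (ae_of_all _ fun ω => f.norm_coe_le_norm _)
  have hHVb : ∀ᵐ ω ∂P, ‖h (X ω) * V ω‖ ≤ ‖h‖ * ‖f‖ := by
    filter_upwards [hVb] with ω hω
    rw [norm_mul]
    gcongr
    exact hHb ω
  have hfg : Integrable (fun ω => f (Y ω) * g (Z ω)) P :=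
    (g.integrable_comp hZ).bdd_mul (f.continuous.measurable.comp hY).aestronglyMeasurable
      (ae_of_all _ fun _ => f.norm_coe_le_norm _)
  calc ∫ ω, f (Y ω) * g (Z ω) * h (X ω) ∂P
      = ∫ ω, h (X ω) * P[fun ω => f (Y ω) * g (Z ω) | m] ω ∂P := by
        rw [integral_mul_condExp_of_bound hm hH hfg (ae_of_all _ hHb)]
        congr 1 with ω
        ring
    _ = ∫ ω, h (X ω) * V ω * P[fun ω => g (Z ω) | m] ω ∂P :=
        integral_congr_ae <| (hci f g).mono fun ω hω => by simp only [hω, mul_assoc, V]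
    _ = ∫ ω, V ω * g (Z ω) * h (X ω) ∂P := by
        rw [integral_mul_condExp_of_bound (H := fun ω => h (X ω) * V ω) hm
          (hH.mul stronglyMeasurable_condExp) (g.integrable_comp hZ) hHVb]
        congr 1 with ω
        ring

theorem integral_mul_eq_of_tendstoInMeasure_condExp {𝒳 𝒴 𝒵 : Type*}
    [PseudoEMetricSpace 𝒳] [MeasurableSpace 𝒳] [OpensMeasurableSpace 𝒳]
    [PseudoEMetricSpace 𝒴] [MeasurableSpace 𝒴] [OpensMeasurableSpace 𝒴]
    [PseudoEMetricSpace 𝒵] [MeasurableSpace 𝒵] [OpensMeasurableSpace 𝒵]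
    {Xn : ℕ → Ω → 𝒳} {Yn : ℕ → Ω → 𝒴} {Zn : ℕ → Ω → 𝒵} {X : Ω → 𝒳} {Y : Ω → 𝒴} {Z : Ω → 𝒵}
    (hXn : ∀ n, Measurable (Xn n)) (hYn : ∀ n, Measurable (Yn n)) (hZn : ∀ n, Measurable (Zn n))
    (hci : ∀ n, CondIndepVia P (MeasurableSpace.comap (Xn n) inferInstance) (Yn n) (Zn n))
    (hX : TendstoInMeasure P Xn atTop X) (hY : TendstoInMeasure P Yn atTop Y)
    (hZ : TendstoInMeasure P Zn atTop Z) {f : 𝒴 →ᵇ ℝ} {w : Ω → ℝ}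
    (hw : TendstoInMeasure P
      (fun n => P[fun ω => f (Yn n ω) | MeasurableSpace.comap (Xn n) inferInstance]) atTop w)
    (g : 𝒵 →ᵇ ℝ) (h : 𝒳 →ᵇ ℝ) :
    ∫ ω, f (Y ω) * g (Z ω) * h (X ω) ∂P = ∫ ω, w ω * g (Z ω) * h (X ω) ∂P := by
  have hlim_left := (hY.prodMk (hZ.prodMk hX)).tendsto_integral_comp
    (φ := fun p => f p.1 * g p.2.1 * h p.2.2) (by fun_prop)
    (fun n => (((f.continuous.measurable.comp (hYn n)).mul
      (g.continuous.measurable.comp (hZn n))).mul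
      (h.continuous.measurable.comp (hXn n))).aestronglyMeasurable)
    (C := ‖f‖ * ‖g‖ * ‖h‖) fun n => ae_of_all _ fun ω => norm_mul₃_le.trans <| by
      gcongr <;> apply BoundedContinuousFunction.norm_coe_le_norm
  have hlim_right := (hw.prodMk (hZ.prodMk hX)).tendsto_integral_comp
    (φ := fun p => p.1 * g p.2.1 * h p.2.2) (by fun_prop)
    (fun n => ((stronglyMeasurable_condExp.mono (hXn n).comap_le).aestronglyMeasurable.mul
      (g.continuous.measurable.comp (hZn n)).aestronglyMeasurable).mul
      (h.continuous.measurable.comp (hXn n)).aestronglyMeasurable)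
    (C := ‖f‖ * ‖g‖ * ‖h‖) fun n => by
      filter_upwards [ae_bdd_norm_condExp_of_ae_bdd_norm (μ := P)
        (m := MeasurableSpace.comap (Xn n) inferInstance)
        (ae_of_all _ fun ω => f.norm_coe_le_norm (Yn n ω))] with ω hω
      refine norm_mul₃_le.trans ?_
      gcongr <;> apply BoundedContinuousFunction.norm_coe_le_norm
  exact tendsto_nhds_unique (hlim_left.congr fun n =>
    (hci n).integral_mul_eq_integral_condExp_mul (hXn n) (hYn n) (hZn n) f g h) hlim_right

end CondIndep

theorem conditional_independence_limit_general
    {Ω : Type*} [MeasurableSpace Ω] (P : Measure Ω) [IsProbabilityMeasure P]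
    {𝒳 𝒴 𝒵 : Type*}
    [MetricSpace 𝒳] [MeasurableSpace 𝒳] [BorelSpace 𝒳]
    [MetricSpace 𝒴] [MeasurableSpace 𝒴] [BorelSpace 𝒴]
    [MetricSpace 𝒵] [MeasurableSpace 𝒵] [BorelSpace 𝒵]
    (Xn : ℕ → Ω → 𝒳) (Yn : ℕ → Ω → 𝒴) (Zn : ℕ → Ω → 𝒵)
    (X : Ω → 𝒳) (Y : Ω → 𝒴) (Z : Ω → 𝒵)
    (hXn : ∀ n, Measurable (Xn n)) (hYn : ∀ n, Measurable (Yn n))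
    (hZn : ∀ n, Measurable (Zn n))
    (hX : Measurable X) (hY : Measurable Y) (hZ : Measurable Z)
    (hci : ∀ n, CondIndepVia P (MeasurableSpace.comap (Xn n) inferInstance) (Yn n) (Zn n))
    (h1 : TendstoInMeasure P Xn atTop X)
    (h2 : TendstoInMeasure P Yn atTop Y)
    (h3 : TendstoInMeasure P Zn atTop Z)
    (h4 : ∀ f : BoundedContinuousFunction 𝒴 ℝ, ∃ w : Ω → ℝ,
      Measurable[MeasurableSpace.comap X inferInstance] w ∧
      TendstoInMeasure P
        (fun n => P[fun ω => f (Yn n ω) | MeasurableSpace.comap (Xn n) inferInstance])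
        atTop w) :
    CondIndepVia P (MeasurableSpace.comap X inferInstance) Y Z := by
  intro f g
  obtain ⟨w, hw, hwt⟩ := h4 f
  have hm := hX.comap_le
  have hwb : ∀ᵐ ω ∂P, ‖w ω‖ ≤ ‖f‖ := hwt.ae_norm_le fun n =>
    ae_bdd_norm_condExp_of_ae_bdd_norm (ae_of_all _ fun ω => f.norm_coe_le_norm (Yn n ω))
  have hw_meas : AEStronglyMeasurable w P := (hw.mono hm le_rfl).aestronglyMeasurable
  have hproj (g' : 𝒵 →ᵇ ℝ) :
      P[fun ω => f (Y ω) * g' (Z ω) | MeasurableSpace.comap X inferInstance]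
        =ᵐ[P] P[fun ω => w ω * g' (Z ω) | MeasurableSpace.comap X inferInstance] :=
    condExp_comap_eq_of_forall_integral_mul_eq hX
      ((g'.integrable_comp hZ).bdd_mul (f.continuous.measurable.comp hY).aestronglyMeasurable
        (ae_of_all _ fun ω => f.norm_coe_le_norm (Y ω)))
      ((g'.integrable_comp hZ).bdd_mul hw_meas hwb)
      (integral_mul_eq_of_tendstoInMeasure_condExp hXn hYn hZn hci h1 h2 h3 hwt g')
  have hfY : P[fun ω => f (Y ω) | MeasurableSpace.comap X inferInstance] =ᵐ[P] w := by
    have hone := hproj 1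
    simp only [BoundedContinuousFunction.coe_one, Pi.one_apply, mul_one] at hone
    rwa [condExp_of_stronglyMeasurable hm hw.stronglyMeasurable (.of_bound hw_meas _ hwb)] at hone
  calc P[fun ω => f (Y ω) * g (Z ω) | MeasurableSpace.comap X inferInstance]
      =ᵐ[P] P[fun ω => w ω * g (Z ω) | MeasurableSpace.comap X inferInstance] := hproj g
    _ =ᵐ[P] fun ω => w ω * P[fun ω => g (Z ω) | MeasurableSpace.comap X inferInstance] ω :=
      condExp_stronglyMeasurable_mul_of_bound hm hw.stronglyMeasurable (g.integrable_comp hZ) _ hwb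
    _ =ᵐ[P] _ := hfY.symm.mul .rfl

/-- Lemma B.2: conditional independence is preserved in the limit. If for each
`n`, `Yₙ` and `Zₙ` are conditionally independent given `σ(Xₙ)`, if `Xₙ → X`, `Yₙ → Y`,
`Zₙ → Z` in probability, and if for every bounded continuous `f` the conditional expectations
`E[f(Yₙ) | σ(Xₙ)]` converge in probability to some `σ(X)`-measurable limit, then `Y` and
`Z` are conditionally independent given `σ(X)`. -/
theorem conditional_independence_limit
    {Ω : Type*} [MeasurableSpace Ω] (P : Measure Ω) [IsProbabilityMeasure P]
    {𝒳 𝒴 𝒵 : Type*}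
    [MetricSpace 𝒳] [PolishSpace 𝒳] [MeasurableSpace 𝒳] [BorelSpace 𝒳]
    [MetricSpace 𝒴] [PolishSpace 𝒴] [MeasurableSpace 𝒴] [BorelSpace 𝒴]
    [MetricSpace 𝒵] [PolishSpace 𝒵] [MeasurableSpace 𝒵] [BorelSpace 𝒵]
    (Xn : ℕ → Ω → 𝒳) (Yn : ℕ → Ω → 𝒴) (Zn : ℕ → Ω → 𝒵)
    (X : Ω → 𝒳) (Y : Ω → 𝒴) (Z : Ω → 𝒵)
    (hXn : ∀ n, Measurable (Xn n)) (hYn : ∀ n, Measurable (Yn n))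
    (hZn : ∀ n, Measurable (Zn n))
    (hX : Measurable X) (hY : Measurable Y) (hZ : Measurable Z)
    (hci : ∀ n, CondIndepVia P (MeasurableSpace.comap (Xn n) inferInstance) (Yn n) (Zn n))
    (h1 : TendstoInMeasure P Xn atTop X)
    (h2 : TendstoInMeasure P Yn atTop Y)
    (h3 : TendstoInMeasure P Zn atTop Z)
    (h4 : ∀ f : BoundedContinuousFunction 𝒴 ℝ, ∃ w : Ω → ℝ,
      Measurable[MeasurableSpace.comap X inferInstance] w ∧
      TendstoInMeasure P
        (fun n => P[fun ω => f (Yn n ω) | MeasurableSpace.comap (Xn n) inferInstance])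
        atTop w) :
    CondIndepVia P (MeasurableSpace.comap X inferInstance) Y Z :=
  conditional_independence_limit_general P Xn Yn Zn X Y Z hXn hYn hZn hX hY hZ hci h1 h2 h3 h4
end

section
/- Let (Ω, ℱ, P) be a probability space and (E, d) a proper (closed balls compact) separable metric space. For each n let 𝔪_n(ω) and 𝔪(ω) be Borel measures on E that are finite on compact sets, and let A_n(ω), A(ω) be nonempty compact subsets of E; assume all the quantities below are measurable in ω. Suppose: (i) almost surely, ∫ f d𝔪_n → ∫ f d𝔪 for every continuous compactly supported f : E → ℝ; (ii) almost surely, the Hausdorff distance d_H(A_n, A) → 0; (iii) for every a > 0, lim_{ε→0} sup_n P( 𝔪_n((A_n)_ε) − 𝔪_n(A_n) ≥ a ) = 0, where (A_n)_ε := {x ∈ E : d(x, A_n) < ε}. Then 𝔪_n(A_n) → 𝔪(A) in probability, i.e. P(|𝔪_n(A_n) − 𝔪(A)| ≥ a) → 0 for every a > 0. -/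
open MeasureTheory Filter Topology Metric
open scoped ENNReal

/-!
Testing vague convergence against Urysohn functions gives, for compact `K` inside open `U`,
`limsup 𝔪ₙ(K) ≤ 𝔪(U)` and `𝔪(K) ≤ liminf 𝔪ₙ(U)`. Since eventually `Aₙ ⊆ A_δ` and `A_δ ⊆ (Aₙ)_2δ`,
this yields almost surely `limsup 𝔪ₙ(Aₙ) ≤ 𝔪(A)` (let `δ → 0`) and `𝔪(A) ≤ liminf 𝔪ₙ((Aₙ)_ε)`
for each `ε > 0`. The first makes `𝔪ₙ(Aₙ) ≥ 𝔪(A) + a` asymptotically negligible in probability;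
by the second, `𝔪ₙ(Aₙ) ≤ 𝔪(A) - a` forces, up to negligible events, the gap
`𝔪ₙ((Aₙ)_ε) - 𝔪ₙ(Aₙ) ≥ a / 2`, whose probability is small uniformly in `n` once `ε` is small.
-/

section Vague

variable {E : Type*} [TopologicalSpace E] [MeasurableSpace E] [OpensMeasurableSpace E]

def TendstoVaguely {ι : Type*} (μs : ι → Measure E) (l : Filter ι) (μ : Measure E) : Prop :=
  ∀ f : E → ℝ, Continuous f → HasCompactSupport f →
    Tendsto (fun i => ∫ x, f x ∂μs i) l (𝓝 (∫ x, f x ∂μ))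

variable {ι : Type*} {l : Filter ι} {μs : ι → Measure E} {μ : Measure E}

theorem TendstoVaguely.tendsto_lintegral_ofReal (h : TendstoVaguely μs l μ)
    [∀ i, IsFiniteMeasureOnCompacts (μs i)] [IsFiniteMeasureOnCompacts μ] {f : E → ℝ}
    (hf : Continuous f) (hfs : HasCompactSupport f) (hf0 : 0 ≤ f) :
    Tendsto (fun i => ∫⁻ x, ENNReal.ofReal (f x) ∂μs i) l
      (𝓝 (∫⁻ x, ENNReal.ofReal (f x) ∂μ)) := by
  simp_rw [← ofReal_integral_eq_lintegral_ofReal (hf.integrable_of_hasCompactSupport hfs)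
    (ae_of_all _ hf0)]
  exact (ENNReal.continuous_ofReal.tendsto _).comp (h f hf hfs)

variable [T2Space E] [LocallyCompactSpace E]

theorem exists_continuous_hasCompactSupport_measure_le_lintegral_le {K U : Set E}
    (hK : IsCompact K) (hU : IsOpen U) (hKU : K ⊆ U) :
    ∃ f : E → ℝ, Continuous f ∧ HasCompactSupport f ∧ 0 ≤ f ∧ ∀ ν : Measure E,
      ν K ≤ ∫⁻ x, ENNReal.ofReal (f x) ∂ν ∧ ∫⁻ x, ENNReal.ofReal (f x) ∂ν ≤ ν U := by
  obtain ⟨f, hfK, hfU, hfs, hf01⟩ := exists_continuous_one_zero_of_isCompact hK hU.isClosed_compl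
    (Set.disjoint_compl_right_iff_subset.2 hKU)
  refine ⟨f, f.continuous, hfs, fun x => (hf01 x).1, fun ν => ⟨?_, ?_⟩⟩
  · rw [← lintegral_indicator_one hK.measurableSet]
    refine lintegral_mono fun x => ?_
    by_cases hx : x ∈ K
    · simp [hx, hfK hx]
    · simp [hx]
  · rw [← lintegral_indicator_one hU.measurableSet]
    refine lintegral_mono fun x => ?_
    by_cases hx : x ∈ U
    · simpa [hx] using (hf01 x).2
    · simp [hx, hfU hx]

variable [l.NeBot] [∀ i, IsFiniteMeasureOnCompacts (μs i)] [IsFiniteMeasureOnCompacts μ]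

theorem TendstoVaguely.limsup_measure_le (h : TendstoVaguely μs l μ) {K U : Set E}
    (hK : IsCompact K) (hU : IsOpen U) (hKU : K ⊆ U) :
    limsup (fun i => μs i K) l ≤ μ U := by
  obtain ⟨f, hf, hfs, hf0, hfKU⟩ :=
    exists_continuous_hasCompactSupport_measure_le_lintegral_le hK hU hKU
  calc limsup (fun i => μs i K) l
      ≤ limsup (fun i => ∫⁻ x, ENNReal.ofReal (f x) ∂μs i) l :=
        limsup_le_limsup (.of_forall fun i => (hfKU _).1)
    _ = ∫⁻ x, ENNReal.ofReal (f x) ∂μ := (h.tendsto_lintegral_ofReal hf hfs hf0).limsup_eq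
    _ ≤ μ U := (hfKU μ).2

theorem TendstoVaguely.measure_le_liminf (h : TendstoVaguely μs l μ) {K U : Set E}
    (hK : IsCompact K) (hU : IsOpen U) (hKU : K ⊆ U) :
    μ K ≤ liminf (fun i => μs i U) l := by
  obtain ⟨f, hf, hfs, hf0, hfKU⟩ :=
    exists_continuous_hasCompactSupport_measure_le_lintegral_le hK hU hKU
  calc μ K ≤ ∫⁻ x, ENNReal.ofReal (f x) ∂μ := (hfKU μ).1
    _ = liminf (fun i => ∫⁻ x, ENNReal.ofReal (f x) ∂μs i) l :=
        (h.tendsto_lintegral_ofReal hf hfs hf0).liminf_eq.symm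
    _ ≤ liminf (fun i => μs i U) l := liminf_le_liminf (.of_forall fun i => (hfKU _).2)

end Vague

theorem Metric.subset_thickening_of_hausdorffDist_lt {E : Type*} [PseudoMetricSpace E]
    {s t : Set E} {δ : ℝ} (hfin : hausdorffEDist s t ≠ ⊤) (h : hausdorffDist s t < δ) :
    s ⊆ thickening δ t := fun _ hx =>
  mem_thickening_iff.2 (exists_dist_lt_of_hausdorffDist_lt hx h hfin)

section Hausdorff

variable {E : Type*} [MetricSpace E] [MeasurableSpace E] [OpensMeasurableSpace E]
  {ι : Type*} {l : Filter ι} [l.NeBot] {μs : ι → Measure E} {μ : Measure E}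
  [∀ i, IsFiniteMeasureOnCompacts (μs i)] [IsFiniteMeasureOnCompacts μ]
  {K : ι → Set E} {A : Set E}

theorem TendstoVaguely.limsup_measure_le_of_tendsto_hausdorffDist [ProperSpace E]
    (h : TendstoVaguely μs l μ) (hA : IsCompact A) (hfin : ∀ i, hausdorffEDist (K i) A ≠ ⊤)
    (hK : Tendsto (fun i => hausdorffDist (K i) A) l (𝓝 0)) :
    limsup (fun i => μs i (K i)) l ≤ μ A := by
  have hlim : Tendsto (fun r => μ (cthickening r A)) (𝓝[>] 0) (𝓝 (μ A)) :=
    (tendsto_measure_cthickening_of_isCompact hA).mono_left nhdsWithin_le_nhds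
  refine ge_of_tendsto hlim (eventually_nhdsWithin_of_forall fun r (hr : 0 < r) => ?_)
  have hKA : ∀ᶠ i in l, K i ⊆ cthickening (r / 2) A := by
    filter_upwards [hK.eventually (gt_mem_nhds (half_pos hr))] with i hi
    exact (subset_thickening_of_hausdorffDist_lt (hfin i) hi).trans
      (thickening_subset_cthickening _ _)
  calc limsup (fun i => μs i (K i)) l ≤ limsup (fun i => μs i (cthickening (r / 2) A)) l :=
        limsup_le_limsup (hKA.mono fun i hi => measure_mono hi)
    _ ≤ μ (thickening r A) := h.limsup_measure_le hA.cthickening isOpen_thickening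
        (cthickening_subset_thickening' hr (half_lt_self hr) A)
    _ ≤ μ (cthickening r A) := measure_mono (thickening_subset_cthickening r A)

theorem TendstoVaguely.measure_le_liminf_thickening_of_tendsto_hausdorffDist
    [LocallyCompactSpace E] (h : TendstoVaguely μs l μ) (hA : IsCompact A)
    (hfin : ∀ i, hausdorffEDist (K i) A ≠ ⊤)
    (hK : Tendsto (fun i => hausdorffDist (K i) A) l (𝓝 0)) {ε : ℝ} (hε : 0 < ε) :
    μ A ≤ liminf (fun i => μs i (thickening ε (K i))) l := by
  have hAK : ∀ᶠ i in l, thickening (ε / 2) A ⊆ thickening ε (K i) := by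
    filter_upwards [hK.eventually (gt_mem_nhds (half_pos hε))] with i hi
    rw [hausdorffDist_comm] at hi
    have hAKi := subset_thickening_of_hausdorffDist_lt (hausdorffEDist_comm.trans_ne (hfin i)) hi
    calc thickening (ε / 2) A ⊆ thickening (ε / 2) (thickening (ε / 2) (K i)) :=
          thickening_subset_of_subset _ hAKi
      _ ⊆ thickening (ε / 2 + ε / 2) (K i) := thickening_thickening_subset _ _ _
      _ = thickening ε (K i) := by rw [add_halves]
  calc μ A ≤ liminf (fun i => μs i (thickening (ε / 2) A)) l :=
        h.measure_le_liminf hA isOpen_thickening (self_subset_thickening (half_pos hε) A)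
    _ ≤ liminf (fun i => μs i (thickening ε (K i))) l :=
        liminf_le_liminf (hAK.mono fun i hi => measure_mono hi)

end Hausdorff

theorem ENNReal.eventually_lt_add_of_le_liminf {ι : Type*} {l : Filter ι} [l.NeBot]
    {u : ι → ℝ≥0∞} {y c : ℝ≥0∞} (hy : y ≠ ∞) (hc : c ≠ 0) (h : y ≤ liminf u l) :
    ∀ᶠ i in l, y < u i + c := by
  refine eventually_lt_of_lt_liminf ?_
  rw [liminf_add_const l u c (by isBoundedDefault) (by isBoundedDefault)]
  exact (ENNReal.lt_add_right hy hc).trans_le (by gcongr)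

theorem ENNReal.add_ofReal_le_or_add_ofReal_le_of_le_abs_toReal_sub {x y : ℝ≥0∞} (hx : x ≠ ∞)
    (hy : y ≠ ∞) {a : ℝ} (ha : 0 ≤ a) (h : a ≤ |x.toReal - y.toReal|) :
    y + ENNReal.ofReal a ≤ x ∨ x + ENNReal.ofReal a ≤ y := by
  have key : ∀ {u v : ℝ≥0∞}, u ≠ ∞ → v ≠ ∞ → u.toReal + a ≤ v.toReal →
      u + ENNReal.ofReal a ≤ v :=
    fun hu hv huv => (ENNReal.toReal_le_toReal (by finiteness) hv).1 <| by
      rwa [ENNReal.toReal_add hu ENNReal.ofReal_ne_top, ENNReal.toReal_ofReal ha]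
  rcases le_abs'.1 h with h | h
  · exact .inr (key hx hy (by linarith))
  · exact .inl (key hy hx (by linarith))

theorem ENNReal.add_le_or_le_tsub_of_add_add_le {x y z c : ℝ≥0∞} (hc : c ≠ ∞)
    (h : x + (c + c) ≤ y) : z + c ≤ y ∨ c ≤ z - x := by
  refine (le_or_gt (z + c) y).imp_right fun hyz => ?_
  have hxz : x + c < z := by
    rw [← ENNReal.add_lt_add_iff_right hc, add_assoc]
    exact h.trans_lt hyz
  exact ENNReal.le_sub_of_add_le_left (le_self_add.trans_lt hxz).ne_top hxz.le

section Probability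

variable {Ω : Type*} [MeasurableSpace Ω] {P : Measure Ω}

theorem limsup_measure_le_of_subset_union {s t u v : ℕ → Set Ω}
    (ht : Tendsto (fun n => P (t n)) atTop (𝓝 0)) (hu : Tendsto (fun n => P (u n)) atTop (𝓝 0))
    (hs : ∀ n, s n ⊆ t n ∪ (u n ∪ v n)) :
    limsup (fun n => P (s n)) atTop ≤ ⨆ n, P (v n) :=
  calc limsup (fun n => P (s n)) atTop
      ≤ limsup (fun n => P (t n) + (P (u n) + ⨆ m, P (v m))) atTop :=
        limsup_le_limsup <| .of_forall fun n => (measure_mono (hs n)).trans <|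
          (measure_union_le _ _).trans <| add_le_add le_rfl <|
            (measure_union_le _ _).trans <| add_le_add le_rfl <| le_iSup (fun m => P (v m)) n
    _ = ⨆ n, P (v n) := by simpa using (ht.add (hu.add_const (⨆ n, P (v n)))).limsup_eq

variable [IsFiniteMeasure P]

theorem tendsto_measure_of_ae_eventually_notMem {s : ℕ → Set Ω} (hs : ∀ n, MeasurableSet (s n))
    (h : ∀ᵐ ω ∂P, ∀ᶠ n in atTop, ω ∉ s n) : Tendsto (fun n => P (s n)) atTop (𝓝 0) := by
  have htail : Tendsto (fun n => P (⋃ m ≥ n, s m)) atTop (𝓝 (P (⋂ n, ⋃ m ≥ n, s m))) :=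
    tendsto_measure_iInter_atTop
      (fun n => (MeasurableSet.biUnion (Set.to_countable _) fun m _ => hs m).nullMeasurableSet)
      (fun _ _ hnk => Set.biUnion_mono (fun _ hm => hnk.trans hm) fun _ _ => le_rfl)
      ⟨0, measure_ne_top _ _⟩
  have hnull : P (⋂ n, ⋃ m ≥ n, s m) = 0 := by
    rw [measure_eq_zero_iff_ae_notMem]
    filter_upwards [h] with ω hω
    simpa [← frequently_atTop] using hω
  rw [hnull] at htail
  exact tendsto_of_tendsto_of_tendsto_of_le_of_le tendsto_const_nhds htail (fun _ => zero_le)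
    fun n => measure_mono (Set.subset_biUnion_of_mem (u := s) (le_refl n))

theorem tendsto_measure_le_abs_toReal_sub_of_limsup_le_of_le_liminf
    {X : ℕ → Ω → ℝ≥0∞} {Y : Ω → ℝ≥0∞} {Z : ℕ → ℝ → Ω → ℝ≥0∞}
    (hX : ∀ n, Measurable (X n)) (hZ : ∀ n, ∀ ε : ℝ, 0 < ε → Measurable (Z n ε))
    (hY : Measurable Y) (hX_top : ∀ n ω, X n ω ≠ ∞) (hY_top : ∀ ω, Y ω ≠ ∞)
    (hup : ∀ᵐ ω ∂P, limsup (X · ω) atTop ≤ Y ω)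
    (hlow : ∀ ε : ℝ, 0 < ε → ∀ᵐ ω ∂P, Y ω ≤ liminf (Z · ε ω) atTop)
    (hgap : ∀ a : ℝ, 0 < a → Tendsto (fun ε : ℝ => ⨆ n,
      P {ω | ENNReal.ofReal a ≤ Z n ε ω - X n ω}) (𝓝[>] (0 : ℝ)) (𝓝 0))
    {a : ℝ} (ha : 0 < a) :
    Tendsto (fun n => P {ω | a ≤ |(X n ω).toReal - (Y ω).toReal|}) atTop (𝓝 0) := by
  have ha' : ENNReal.ofReal a ≠ 0 := by simpa using ha
  have ha2 : ENNReal.ofReal (a / 2) ≠ 0 := by simpa using ha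
  suffices hlimsup : ∀ ε : ℝ, 0 < ε → limsup (fun n => P {ω | a ≤ |(X n ω).toReal - (Y ω).toReal|})
      atTop ≤ ⨆ n, P {ω | ENNReal.ofReal (a / 2) ≤ Z n ε ω - X n ω} by
    refine tendsto_of_le_liminf_of_limsup_le zero_le ?_
    exact ge_of_tendsto (hgap _ (half_pos ha)) (eventually_nhdsWithin_of_forall hlimsup)
  intro ε hε
  have hF : Tendsto (fun n => P {ω | Y ω + ENNReal.ofReal a ≤ X n ω}) atTop (𝓝 0) := by
    refine tendsto_measure_of_ae_eventually_notMem
      (fun n => measurableSet_le (hY.add_const _) (hX n)) ?_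
    filter_upwards [hup] with ω hω
    exact (eventually_lt_of_limsup_lt (hω.trans_lt (ENNReal.lt_add_right (hY_top ω) ha'))).mono
      fun n hn => not_le.2 hn
  have hG : Tendsto (fun n => P {ω | Z n ε ω + ENNReal.ofReal (a / 2) ≤ Y ω}) atTop (𝓝 0) := by
    refine tendsto_measure_of_ae_eventually_notMem
      (fun n => measurableSet_le ((hZ n ε hε).add_const _) hY) ?_
    filter_upwards [hlow ε hε] with ω hω
    exact (ENNReal.eventually_lt_add_of_le_liminf (hY_top ω) ha2 hω).mono fun n hn => not_le.2 hn
  refine limsup_measure_le_of_subset_union hF hG fun n ω hω => ?_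
  exact (ENNReal.add_ofReal_le_or_add_ofReal_le_of_le_abs_toReal_sub (hX_top n ω) (hY_top ω)
    ha.le hω).imp_right fun h => ENNReal.add_le_or_le_tsub_of_add_add_le ENNReal.ofReal_ne_top
      (by rwa [← ENNReal.ofReal_add (by positivity) (by positivity), add_halves])

end Probability

theorem mass_of_converging_sets_general
    {Ω : Type*} [MeasurableSpace Ω] (P : Measure Ω) [IsProbabilityMeasure P]
    {E : Type*} [MetricSpace E] [ProperSpace E]
    [MeasurableSpace E] [BorelSpace E]
    (𝔪n : ℕ → Ω → Measure E) (𝔪 : Ω → Measure E)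
    (An : ℕ → Ω → Set E) (A : Ω → Set E)
    (hfin_n : ∀ n ω (K : Set E), IsCompact K → 𝔪n n ω K < ⊤)
    (hfin : ∀ ω (K : Set E), IsCompact K → 𝔪 ω K < ⊤)
    (hAn : ∀ n ω, IsCompact (An n ω) ∧ (An n ω).Nonempty)
    (hA : ∀ ω, IsCompact (A ω) ∧ (A ω).Nonempty)
    (hmeas1 : ∀ n, Measurable fun ω => 𝔪n n ω (An n ω))
    (hmeas2 : ∀ n, ∀ ε : ℝ, 0 < ε → Measurable fun ω => 𝔪n n ω (thickening ε (An n ω)))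
    (hmeas3 : Measurable fun ω => 𝔪 ω (A ω))
    (h1 : ∀ᵐ ω ∂P, ∀ f : E → ℝ, Continuous f → HasCompactSupport f →
      Tendsto (fun n => ∫ x, f x ∂(𝔪n n ω)) atTop (𝓝 (∫ x, f x ∂(𝔪 ω))))
    (h2 : ∀ᵐ ω ∂P, Tendsto (fun n => hausdorffDist (An n ω) (A ω)) atTop (𝓝 0))
    (h3 : ∀ a : ℝ, 0 < a →
      Tendsto (fun ε : ℝ => ⨆ n,
          P {ω | ENNReal.ofReal a ≤ 𝔪n n ω (thickening ε (An n ω)) - 𝔪n n ω (An n ω)})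
        (𝓝[>] (0 : ℝ)) (𝓝 0)) :
    ∀ a : ℝ, 0 < a →
      Tendsto (fun n => P {ω | a ≤ |(𝔪n n ω (An n ω)).toReal - (𝔪 ω (A ω)).toReal|})
        atTop (𝓝 0) := by
  intro a ha
  have : ∀ n ω, IsFiniteMeasureOnCompacts (𝔪n n ω) := fun n ω => ⟨hfin_n n ω⟩
  have : ∀ ω, IsFiniteMeasureOnCompacts (𝔪 ω) := fun ω => ⟨hfin ω⟩
  have hdist : ∀ n ω, hausdorffEDist (An n ω) (A ω) ≠ ⊤ := fun n ω =>
    hausdorffEDist_ne_top_of_nonempty_of_bounded (hAn n ω).2 (hA ω).2 (hAn n ω).1.isBounded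
      (hA ω).1.isBounded
  refine tendsto_measure_le_abs_toReal_sub_of_limsup_le_of_le_liminf hmeas1 hmeas2 hmeas3
    (fun n ω => (hfin_n n ω _ (hAn n ω).1).ne) (fun ω => (hfin ω _ (hA ω).1).ne) ?_ ?_ h3 ha
  · filter_upwards [h1, h2] with ω hvague hhaus
    exact TendstoVaguely.limsup_measure_le_of_tendsto_hausdorffDist hvague (hA ω).1 (hdist · ω)
      hhaus
  · intro ε hε
    filter_upwards [h1, h2] with ω hvague hhaus
    exact TendstoVaguely.measure_le_liminf_thickening_of_tendsto_hausdorffDist hvague (hA ω).1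
      (hdist · ω) hhaus hε

/-- Lemma B.3: convergence of the mass of converging sets under converging
random measures. If a.s. `𝔪ₙ → 𝔪` vaguely, a.s. `Aₙ → A` in Hausdorff distance, and the
masses of small thickenings of `Aₙ` are uniformly (in `n`) controlled in probability, then
`𝔪ₙ(Aₙ) → 𝔪(A)` in probability. -/
theorem mass_of_converging_sets
    {Ω : Type*} [MeasurableSpace Ω] (P : Measure Ω) [IsProbabilityMeasure P]
    {E : Type*} [MetricSpace E] [ProperSpace E] [TopologicalSpace.SeparableSpace E]
    [MeasurableSpace E] [BorelSpace E]
    (𝔪n : ℕ → Ω → Measure E) (𝔪 : Ω → Measure E)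
    (An : ℕ → Ω → Set E) (A : Ω → Set E)
    (hfin_n : ∀ n ω (K : Set E), IsCompact K → 𝔪n n ω K < ⊤)
    (hfin : ∀ ω (K : Set E), IsCompact K → 𝔪 ω K < ⊤)
    (hAn : ∀ n ω, IsCompact (An n ω) ∧ (An n ω).Nonempty)
    (hA : ∀ ω, IsCompact (A ω) ∧ (A ω).Nonempty)
    (hmeas1 : ∀ n, Measurable fun ω => 𝔪n n ω (An n ω))
    (hmeas2 : ∀ n, ∀ ε : ℝ, 0 < ε → Measurable fun ω => 𝔪n n ω (thickening ε (An n ω)))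
    (hmeas3 : Measurable fun ω => 𝔪 ω (A ω))
    (h1 : ∀ᵐ ω ∂P, ∀ f : E → ℝ, Continuous f → HasCompactSupport f →
      Tendsto (fun n => ∫ x, f x ∂(𝔪n n ω)) atTop (𝓝 (∫ x, f x ∂(𝔪 ω))))
    (h2 : ∀ᵐ ω ∂P, Tendsto (fun n => hausdorffDist (An n ω) (A ω)) atTop (𝓝 0))
    (h3 : ∀ a : ℝ, 0 < a →
      Tendsto (fun ε : ℝ => ⨆ n,
          P {ω | ENNReal.ofReal a ≤ 𝔪n n ω (thickening ε (An n ω)) - 𝔪n n ω (An n ω)})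
        (𝓝[>] (0 : ℝ)) (𝓝 0)) :
    ∀ a : ℝ, 0 < a →
      Tendsto (fun n => P {ω | a ≤ |(𝔪n n ω (An n ω)).toReal - (𝔪 ω (A ω)).toReal|})
        atTop (𝓝 0) :=
  mass_of_converging_sets_general P 𝔪n 𝔪 An A hfin_n hfin hAn hA hmeas1 hmeas2 hmeas3 h1 h2 h3
end
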